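/- arXiv:2107.09271 — 7 statements merged into one kernel-verified Lean document; each statement's English description precedes it below -/
import Mathlib

section
/- If f is locally absolutely continuous on (a,r), f' ∈ L²((a,r);dx), and ∫_a^r |f(x)|²/(x-a)² dx < ∞, then lim_{x→a⁺} |f(x)|²/(x-a) = 0; in particular lim_{x→a⁺} f(x) = 0. -/
/-!
Put `g x = ‖f x‖² / (x - a)`. Its derivative `(2⟪f, f'⟫ (x - a) - ‖f‖²) / (x - a)²` is bounded by
`‖f'‖² + 2 ‖f‖² / (x - a)²`, which is integrable near `a`, so `g` has a limit `L` at `a⁺`.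
Since `g x / (x - a) = ‖f x‖² / (x - a)²` is integrable while `1 / (x - a)` is not, `L = 0`;
then `‖f x‖² = g x * (x - a) → 0`.
-/

open MeasureTheory Set Filter Topology Asymptotics intervalIntegral

open scoped RealInnerProductSpace

section

variable {E : Type*} [NormedAddCommGroup E] [NormedSpace ℝ E]

theorem exists_tendsto_nhdsGT_of_hasDerivAt_of_integrableOn [CompleteSpace E]
    {g g' : ℝ → E} {a c : ℝ} (hac : a < c)
    (hg : ∀ x ∈ Ioo a c, HasDerivAt g (g' x) x) (hg' : IntegrableOn g' (Ioo a c)) :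
    ∃ L, Tendsto g (𝓝[>] a) (𝓝 L) := by
  obtain ⟨m, ham, hmc⟩ := exists_between hac
  have hint : IntegrableOn g' (uIcc a m) := by
    rw [uIcc_of_le ham.le, integrableOn_Icc_iff_integrableOn_Ioo]
    exact hg'.mono_set (Ioo_subset_Ioo_right hmc.le)
  have hprim : Tendsto (fun x => ∫ t in x..m, g' t) (𝓝[>] a) (𝓝 (∫ t in a..m, g' t)) := by
    have hcont := continuousOn_primitive_interval_left hint a left_mem_uIcc
    rw [uIcc_of_le ham.le] at hcont
    rw [← nhdsWithin_Ioc_eq_nhdsGT ham]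
    exact hcont.tendsto.mono_left (nhdsWithin_mono _ Ioc_subset_Icc_self)
  refine ⟨g m - ∫ t in a..m, g' t, (tendsto_const_nhds.sub hprim).congr' ?_⟩
  filter_upwards [Ioo_mem_nhdsGT ham] with x hx
  have hxm : uIcc x m ⊆ uIcc a m :=
    uIcc_subset_uIcc_right (Icc_subset_uIcc (Ioo_subset_Icc_self hx))
  rw [integral_eq_sub_of_hasDerivAt (fun t ht => hg t ?_) (hint.mono_set hxm).intervalIntegrable,
    sub_sub_cancel]
  rw [uIcc_of_le hx.2.le] at ht
  exact ⟨hx.1.trans_le ht.1, ht.2.trans_lt hmc⟩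

theorem eq_zero_of_tendsto_of_integrableOn_inv_sub_smul {u : ℝ → E} {a c : ℝ} {L : E}
    (hac : a < c) (hu : Tendsto u (𝓝[>] a) (𝓝 L))
    (hint : IntegrableOn (fun x => (x - a)⁻¹ • u x) (Ioo a c)) : L = 0 := by
  by_contra hL
  -- `log (x - a)` blows up at `a⁺`, and its derivative `(x - a)⁻¹` is `O((x - a)⁻¹ • u x)`.
  have hlog : ∀ x ∈ Ioi a, HasDerivAt (fun y => Real.log (y - a)) (x - a)⁻¹ x := fun x hx => by
    simpa using ((hasDerivAt_id x).sub_const a).log (sub_pos.2 hx).ne'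
  have hlog_top : Tendsto (fun x => ‖Real.log (x - a)‖) (𝓝[>] a) atTop := by
    refine tendsto_abs_atBot_atTop.comp (Real.tendsto_log_nhdsNE_zero.comp ?_)
    rw [← sub_self a]
    exact (((hasDerivAt_id a).sub_const a).tendsto_nhdsNE one_ne_zero).mono_left
      (nhdsGT_le_nhdsNE a)
  have hu_large : (fun _ => (1 : ℝ)) =O[𝓝[>] a] u :=
    (isBigO_const_left_iff_pos_le_norm one_ne_zero).2 ⟨‖L‖ / 2, by positivity,
      hu.norm.eventually (eventually_ge_nhds (half_lt_self (norm_pos_iff.2 hL)))⟩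
  have hderiv : deriv (fun y => Real.log (y - a)) =ᶠ[𝓝[>] a] fun x => (x - a)⁻¹ • (1 : ℝ) :=
    eventually_nhdsWithin_of_forall fun x hx => by simp [(hlog x hx).deriv]
  exact not_integrableOn_of_tendsto_norm_atTop_of_deriv_isBigO_filter (𝓝[>] a)
    (Ioo_mem_nhdsGT hac) (eventually_nhdsWithin_of_forall fun x hx => (hlog x hx).differentiableAt)
    hlog_top (hderiv.trans_isBigO ((isBigO_refl _ _).smul hu_large)) hint

end

section

variable {F : Type*} [NormedAddCommGroup F] [InnerProductSpace ℝ F]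

theorem HasDerivAt.norm_sq_div_sub {f : ℝ → F} {f' : F} {x a : ℝ} (hf : HasDerivAt f f' x)
    (hx : x ≠ a) :
    HasDerivAt (fun y => ‖f y‖ ^ 2 / (y - a))
      ((2 * ⟪f x, f'⟫ * (x - a) - ‖f x‖ ^ 2) / (x - a) ^ 2) x := by
  simpa only [mul_one] using
    hf.norm_sq.fun_div ((hasDerivAt_id' x).sub_const a) (sub_ne_zero.2 hx)

theorem abs_two_inner_mul_sub_norm_sq_div_sq_le (v w : F) {s : ℝ} (hs : 0 < s) :
    |(2 * ⟪v, w⟫ * s - ‖v‖ ^ 2) / s ^ 2| ≤ ‖w‖ ^ 2 + 2 * (‖v‖ ^ 2 / s ^ 2) := by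
  have hinner : |2 * ⟪v, w⟫ * s| ≤ ‖v‖ ^ 2 + ‖w‖ ^ 2 * s ^ 2 :=
    calc |2 * ⟪v, w⟫ * s| = 2 * |⟪v, w⟫| * s := by
          rw [abs_mul, abs_mul, abs_two, abs_of_pos hs]
      _ ≤ 2 * (‖v‖ * ‖w‖) * s := by gcongr; exact abs_real_inner_le_norm v w
      _ ≤ ‖v‖ ^ 2 + ‖w‖ ^ 2 * s ^ 2 := by nlinarith [sq_nonneg (‖v‖ - ‖w‖ * s)]
  have hrhs : (‖w‖ ^ 2 + 2 * (‖v‖ ^ 2 / s ^ 2)) * s ^ 2 = ‖w‖ ^ 2 * s ^ 2 + 2 * ‖v‖ ^ 2 := by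
    field_simp
  rw [abs_div, abs_of_pos (pow_pos hs 2), div_le_iff₀ (pow_pos hs 2), hrhs]
  refine (abs_sub _ _).trans ?_
  rw [abs_of_nonneg (sq_nonneg ‖v‖)]
  linarith

theorem tendsto_norm_sq_div_sub_nhdsGT_zero {f f' : ℝ → F} {a c : ℝ} (hac : a < c)
    (hf : ∀ x ∈ Ioo a c, HasDerivAt f (f' x) x)
    (hf' : IntegrableOn (fun x => ‖f' x‖ ^ 2) (Ioo a c))
    (hw : IntegrableOn (fun x => ‖f x‖ ^ 2 / (x - a) ^ 2) (Ioo a c)) :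
    Tendsto (fun x => ‖f x‖ ^ 2 / (x - a)) (𝓝[>] a) (𝓝 0) := by
  set g := fun x => ‖f x‖ ^ 2 / (x - a)
  have hg : ∀ x ∈ Ioo a c, HasDerivAt g _ x := fun x hx => (hf x hx).norm_sq_div_sub hx.1.ne'
  have hg' : IntegrableOn (deriv g) (Ioo a c) := by
    refine (hf'.add (hw.const_mul 2)).mono' (measurable_deriv g).aestronglyMeasurable ?_
    refine (ae_restrict_iff' measurableSet_Ioo).2 (ae_of_all _ fun x hx => ?_)
    rw [(hg x hx).deriv]
    exact abs_two_inner_mul_sub_norm_sq_div_sq_le _ _ (sub_pos.2 hx.1)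
  obtain ⟨L, hL⟩ := exists_tendsto_nhdsGT_of_hasDerivAt_of_integrableOn hac
    (fun x hx => (hg x hx).differentiableAt.hasDerivAt) hg'
  have hw' : IntegrableOn (fun x => (x - a)⁻¹ • g x) (Ioo a c) := by
    refine hw.congr_fun (fun x _ => ?_) measurableSet_Ioo
    rw [smul_eq_mul, inv_mul_eq_div, div_div, ← sq]
  rwa [eq_zero_of_tendsto_of_integrableOn_inv_sub_smul hac hL hw'] at hL

end

theorem tendsto_nhdsGT_zero_of_norm_sq_div_sub {E : Type*} [NormedAddCommGroup E]
    {f : ℝ → E} {a : ℝ} (h : Tendsto (fun x => ‖f x‖ ^ 2 / (x - a)) (𝓝[>] a) (𝓝 0)) :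
    Tendsto f (𝓝[>] a) (𝓝 0) := by
  have hsub : Tendsto (fun x : ℝ => x - a) (𝓝[>] a) (𝓝 0) := by
    simpa using ((continuous_sub_right a).tendsto a).mono_left nhdsWithin_le_nhds
  have hsq : Tendsto (fun x => ‖f x‖ ^ 2) (𝓝[>] a) (𝓝 0) := by
    have hmul := h.mul hsub
    rw [zero_mul] at hmul
    refine hmul.congr' ?_
    filter_upwards [self_mem_nhdsWithin] with x hx
    exact div_mul_cancel₀ _ (sub_pos.2 hx).ne'
  rw [tendsto_zero_iff_norm_tendsto_zero]
  simpa using hsq.sqrt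

/-- If `f` is locally absolutely continuous on `(a,r)`, `f' ∈ L²`, and
`∫ |f|²/(x-a)² < ∞`, then `|f(x)|²/(x-a) → 0` and `f(x) → 0` as `x → a⁺`. -/
theorem stmt2 (a : ℝ) (I : Set ℝ)
    (hI : (∃ r : ℝ, a < r ∧ I = Ioo a r) ∨ I = Ioi a)
    (f f' : ℝ → ℂ)
    (hderiv : ∀ x ∈ I, HasDerivAt f (f' x) x)
    (hL2 : IntegrableOn (fun x => ‖f' x‖ ^ 2) I)
    (hw : IntegrableOn (fun x => ‖f x‖ ^ 2 / (x - a) ^ 2) I) :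
    Tendsto (fun x => ‖f x‖ ^ 2 / (x - a)) (nhdsWithin a (Ioi a)) (nhds 0) ∧
    Tendsto f (nhdsWithin a (Ioi a)) (nhds 0) := by
  obtain ⟨c, hac, hcI⟩ : ∃ c, a < c ∧ Ioo a c ⊆ I := by
    rcases hI with ⟨r, har, rfl⟩ | rfl
    · exact ⟨r, har, subset_rfl⟩
    · exact ⟨a + 1, lt_add_one a, Ioo_subset_Ioi_self⟩
  have h := tendsto_norm_sq_div_sub_nhdsGT_zero hac (fun x hx => hderiv x (hcI hx))
    (hL2.mono_set hcI) (hw.mono_set hcI)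
  exact ⟨h, tendsto_nhdsGT_zero_of_norm_sq_div_sub h⟩
end

section
/- For all x ∈ (0,π), x^{-2} + (π-x)^{-2} + c₀ < (sin x)^{-2} + 1 holds for every constant c₀ ∈ (0, 2 - 8/π²). -/
/-!
On `(0, π)` the function `1 / sin x ^ 2 - 1 / x ^ 2 - 1 / (π - x) ^ 2` is symmetric about `π / 2`
and attains its minimum `1 - 8 / π ^ 2` there, which is exactly what the bound on `c₀` allows.
On `(0, π / 2]` we bound `sin x` above by a Taylor polynomial — at `0` for `x ≤ 1`, at `π / 2`
for `x ≥ 1` — clear denominators, and check the resulting polynomial inequalities with `π`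
pinned between `3.141592` and `3.141593`.
-/

open Real Set

lemma apply_zero_le_of_hasDerivAt_nonneg {f f' : ℝ → ℝ} (hf : ∀ y, HasDerivAt f (f' y) y)
    (hf' : ∀ y, 0 ≤ y → 0 ≤ f' y) {x : ℝ} (hx : 0 ≤ x) : f 0 ≤ f x := by
  exact monotoneOn_of_hasDerivWithinAt_nonneg (convex_Ici 0)
    (fun y _ ↦ (hf y).continuousAt.continuousWithinAt) (fun y _ ↦ (hf y).hasDerivWithinAt)
    (fun y hy ↦ hf' y (interior_subset hy)) self_mem_Ici hx hx

lemma Real.cos_le_one_sub_sq_div_two_add_pow_four_div_24 (x : ℝ) :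
    cos x ≤ 1 - x ^ 2 / 2 + x ^ 4 / 24 := by
  wlog hx : 0 ≤ x generalizing x
  · simpa [cos_neg, Even.neg_pow (by decide : Even 2), Even.neg_pow (by decide : Even 4)]
      using this (-x) (by linarith)
  have hderiv (y : ℝ) : HasDerivAt (fun y ↦ 1 - y ^ 2 / 2 + y ^ 4 / 24 - cos y)
      (-y + y ^ 3 / 6 + sin y) y := by
    refine ((((hasDerivAt_const y 1).sub ((hasDerivAt_pow 2 y).div_const 2)).add
      ((hasDerivAt_pow 4 y).div_const 24)).sub (hasDerivAt_cos y)).congr_deriv ?_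
    push_cast
    ring
  have := apply_zero_le_of_hasDerivAt_nonneg hderiv
    (fun y hy ↦ by linarith [sin_ge_sub_cube hy]) hx
  norm_num at this
  linarith

lemma Real.sin_le_sub_cube_div_six_add_pow_five_div_120 {x : ℝ} (hx : 0 ≤ x) :
    sin x ≤ x - x ^ 3 / 6 + x ^ 5 / 120 := by
  have hderiv (y : ℝ) : HasDerivAt (fun y ↦ y - y ^ 3 / 6 + y ^ 5 / 120 - sin y)
      (1 - y ^ 2 / 2 + y ^ 4 / 24 - cos y) y := by
    refine ((((hasDerivAt_id y).sub ((hasDerivAt_pow 3 y).div_const 6)).add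
      ((hasDerivAt_pow 5 y).div_const 120)).sub (hasDerivAt_sin y)).congr_deriv ?_
    push_cast
    ring
  have := apply_zero_le_of_hasDerivAt_nonneg hderiv
    (fun y _ ↦ by linarith [cos_le_one_sub_sq_div_two_add_pow_four_div_24 y]) hx
  norm_num at this
  linarith

lemma one_div_sq_add_one_div_sq_add_div_le_one_div_sq {x y s u a b : ℝ} (hx : x ≠ 0)
    (hy : y ≠ 0) (hb : 0 < b) (hs : 0 < s) (hsu : s ≤ u)
    (h : u ^ 2 * (b * y ^ 2 + b * x ^ 2 + a * (x ^ 2 * y ^ 2)) ≤ b * (x ^ 2 * y ^ 2)) :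
    1 / x ^ 2 + 1 / y ^ 2 + a / b ≤ 1 / s ^ 2 := by
  have hxy : 0 < x ^ 2 * y ^ 2 := by positivity
  have hs2 : s ^ 2 ≤ u ^ 2 := pow_le_pow_left₀ hs.le hsu 2
  rw [show 1 / x ^ 2 + 1 / y ^ 2 + a / b
      = (b * y ^ 2 + b * x ^ 2 + a * (x ^ 2 * y ^ 2)) / (b * (x ^ 2 * y ^ 2)) by
    field_simp, div_le_div_iff₀ (by positivity) (by positivity)]
  rcases le_total 0 (b * y ^ 2 + b * x ^ 2 + a * (x ^ 2 * y ^ 2)) with hQ | hQ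
  · nlinarith [mul_le_mul_of_nonneg_right hs2 hQ]
  · nlinarith [mul_nonneg (sq_nonneg s) (neg_nonneg.2 hQ)]


lemma taylor_certificate_near_pi_div_two {t p : ℝ} (ht : 0 ≤ t) (ht1 : t ≤ 0.5709)
    (hp : 3.141592 < p) (hp' : p < 3.141593) :
    0 ≤ -55296 * p ^ 2 + 576 * p ^ 6
      + t ^ 2 * (73728 + 55296 * p ^ 2 - 4608 * p ^ 4 - 192 * p ^ 6)
      + t ^ 4 * (-73728 - 9216 * p ^ 2 + 1536 * p ^ 4 + 24 * p ^ 6)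
      + t ^ 6 * (24576 - 768 * p ^ 2 - 192 * p ^ 4 - p ^ 6)
      + t ^ 8 * (-3072 + 288 * p ^ 2 + 8 * p ^ 4)
      + t ^ 10 * (128 - 16 * p ^ 2) := by
  have h2 : p ^ 2 ≤ 9.8696066 := by nlinarith
  have h2' : 9.8696002 ≤ p ^ 2 := by nlinarith
  have h4 : p ^ 4 ≤ 97.409134 := by nlinarith
  have h4' : 97.409009 ≤ p ^ 4 := by nlinarith
  have h6 : p ^ 6 ≤ 961.38983 := by nlinarith [h2, h2', h4, h4']
  have h6' : 961.38799 ≤ p ^ 6 := by nlinarith [h2, h2', h4, h4']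
  have ht2 : t ^ 2 ≤ 0.32593 := by nlinarith
  nlinarith [mul_nonneg (sq_nonneg t) (sq_nonneg t), sq_nonneg t,
    mul_nonneg (mul_nonneg (sq_nonneg t) (sq_nonneg t)) (sq_nonneg t),
    sq_nonneg (t ^ 2), sq_nonneg (t ^ 3), sq_nonneg (t ^ 4), sq_nonneg (t ^ 5),
    mul_nonneg (sq_nonneg (t ^ 2)) (sub_nonneg.2 ht2),
    mul_nonneg (mul_nonneg (sq_nonneg (t ^ 2)) (sq_nonneg t)) (sub_nonneg.2 ht2),
    mul_nonneg (sq_nonneg (t ^ 4)) (sub_nonneg.2 ht2),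
    mul_nonneg (sq_nonneg t) (sub_nonneg.2 ht2)]

lemma taylor_certificate_near_zero {x : ℝ} (hx : 0 ≤ x) (hx1 : x ≤ 1) :
    (1 - x ^ 2 / 6 + x ^ 4 / 120) ^ 2 * (3.141593 ^ 2 + (3.141593 ^ 2 - 8) * (3.141593 - x) ^ 2)
      ≤ 3.141592 ^ 2 * (3.141592 - x) ^ 2 * (20 - x ^ 2)
          * (2 - x ^ 2 / 6 + x ^ 4 / 120) / 120 := by
  nlinarith [sq_nonneg (1 - x), sq_nonneg x, mul_nonneg hx (sub_nonneg.2 hx1),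
    sq_nonneg (x - x ^ 2), sq_nonneg (x * (1 - x)), pow_le_one₀ (n := 4) hx hx1,
    pow_le_one₀ (n := 6) hx hx1, sq_nonneg (1 - x ^ 2),
    mul_nonneg (mul_nonneg hx hx) (sub_nonneg.2 hx1)]

lemma cos_taylor_sq_mul_le {x : ℝ} (hx1 : 1 ≤ x) (hx : x ≤ π / 2) :
    (1 - (π / 2 - x) ^ 2 / 2 + (π / 2 - x) ^ 4 / 24) ^ 2
        * (π ^ 2 * (π - x) ^ 2 + π ^ 2 * x ^ 2 + (π ^ 2 - 8) * (x ^ 2 * (π - x) ^ 2))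
      ≤ π ^ 2 * (x ^ 2 * (π - x) ^ 2) := by
  obtain ⟨t, rfl⟩ : ∃ t, x = π / 2 - t := ⟨π / 2 - x, by ring⟩
  have hP := taylor_certificate_near_pi_div_two (p := π) (by linarith)
    (by linarith [pi_lt_d6]) pi_gt_d6 pi_lt_d6
  rw [show π - (π / 2 - t) = π / 2 + t by ring, sub_sub_cancel]
  -- Equality holds at `t = 0`, so the defect is `t ^ 2` times the certified polynomial.
  linear_combination (t ^ 2 / 9216) * hP

lemma sin_taylor_sq_mul_le {x : ℝ} (hx : 0 ≤ x) (hx1 : x ≤ 1) :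
    (x - x ^ 3 / 6 + x ^ 5 / 120) ^ 2
        * (π ^ 2 * (π - x) ^ 2 + π ^ 2 * x ^ 2 + (π ^ 2 - 8) * (x ^ 2 * (π - x) ^ 2))
      ≤ π ^ 2 * (x ^ 2 * (π - x) ^ 2) := by
  have hπ₀ := pi_gt_d6
  have hπ₁ := pi_lt_d6
  have hx2 : x ^ 2 ≤ 1 := by nlinarith
  -- The goal divided by `x ^ 4`, via `1 - v ^ 2 = x ^ 2 (20 - x ^ 2) (1 + v) / 120`
  -- for `v = 1 - x ^ 2 / 6 + x ^ 4 / 120`.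
  have hv : (1 - x ^ 2 / 6 + x ^ 4 / 120) ^ 2 * (π ^ 2 + (π ^ 2 - 8) * (π - x) ^ 2)
      ≤ π ^ 2 * (π - x) ^ 2 * (20 - x ^ 2) * (2 - x ^ 2 / 6 + x ^ 4 / 120) / 120 :=
    calc (1 - x ^ 2 / 6 + x ^ 4 / 120) ^ 2 * (π ^ 2 + (π ^ 2 - 8) * (π - x) ^ 2)
        ≤ (1 - x ^ 2 / 6 + x ^ 4 / 120) ^ 2
            * (3.141593 ^ 2 + (3.141593 ^ 2 - 8) * (3.141593 - x) ^ 2) := by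
          have : 0 ≤ π ^ 2 - 8 := by nlinarith
          gcongr; linarith
      _ ≤ 3.141592 ^ 2 * (3.141592 - x) ^ 2 * (20 - x ^ 2)
            * (2 - x ^ 2 / 6 + x ^ 4 / 120) / 120 :=
          taylor_certificate_near_zero hx hx1
      _ ≤ π ^ 2 * (π - x) ^ 2 * (20 - x ^ 2) * (2 - x ^ 2 / 6 + x ^ 4 / 120) / 120 := by
          have : 0 ≤ 20 - x ^ 2 := by linarith
          have : 0 ≤ 2 - x ^ 2 / 6 + x ^ 4 / 120 := by linarith [pow_nonneg hx 4]
          gcongr; linarith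
  linear_combination x ^ 4 * hv

lemma one_div_sq_add_one_div_pi_sub_sq_add_le_one_div_sin_sq_of_le_pi_div_two {x : ℝ}
    (hx : 0 < x) (hxπ : x ≤ π / 2) :
    1 / x ^ 2 + 1 / (π - x) ^ 2 + (π ^ 2 - 8) / π ^ 2 ≤ 1 / sin x ^ 2 := by
  have hsin : 0 < sin x := sin_pos_of_pos_of_lt_pi hx (by linarith [pi_pos])
  have hπx : π - x ≠ 0 := by linarith [pi_pos]
  rcases le_total x 1 with hx1 | hx1
  · exact one_div_sq_add_one_div_sq_add_div_le_one_div_sq hx.ne' hπx (by positivity) hsin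
      (sin_le_sub_cube_div_six_add_pow_five_div_120 hx.le) (sin_taylor_sq_mul_le hx.le hx1)
  · refine one_div_sq_add_one_div_sq_add_div_le_one_div_sq hx.ne' hπx (by positivity) hsin
      ?_ (cos_taylor_sq_mul_le hx1 hxπ)
    rw [← cos_pi_div_two_sub]
    exact cos_le_one_sub_sq_div_two_add_pow_four_div_24 _

lemma one_div_sq_add_one_div_pi_sub_sq_add_le_one_div_sin_sq {x : ℝ} (hx : 0 < x)
    (hxπ : x < π) : 1 / x ^ 2 + 1 / (π - x) ^ 2 + (π ^ 2 - 8) / π ^ 2 ≤ 1 / sin x ^ 2 := by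
  rcases le_total x (π / 2) with h | h
  · exact one_div_sq_add_one_div_pi_sub_sq_add_le_one_div_sin_sq_of_le_pi_div_two hx h
  · have := one_div_sq_add_one_div_pi_sub_sq_add_le_one_div_sin_sq_of_le_pi_div_two
      (x := π - x) (by linarith) (by linarith)
    rw [sin_pi_sub, sub_sub_cancel] at this
    linarith

theorem stmt4_general (c₀ : ℝ) (hc1 : c₀ < 2 - 8 / Real.pi ^ 2) :
    ∀ x ∈ Ioo (0 : ℝ) Real.pi,
      1 / x ^ 2 + 1 / (Real.pi - x) ^ 2 + c₀ < 1 / Real.sin x ^ 2 + 1 := by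
  rintro x ⟨hx, hxπ⟩
  have hkey := one_div_sq_add_one_div_pi_sub_sq_add_le_one_div_sin_sq hx hxπ
  have hconst : (π ^ 2 - 8) / π ^ 2 = 1 - 8 / π ^ 2 := by field_simp
  linarith

/-- For every constant `c₀ ∈ (0, 2 - 8/π²)` and all `x ∈ (0,π)`,
`x⁻² + (π-x)⁻² + c₀ < (sin x)⁻² + 1`. -/
theorem stmt4 (c₀ : ℝ) (hc0 : 0 < c₀) (hc1 : c₀ < 2 - 8 / Real.pi ^ 2) :
    ∀ x ∈ Ioo (0 : ℝ) Real.pi,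
      1 / x ^ 2 + 1 / (Real.pi - x) ^ 2 + c₀ < 1 / Real.sin x ^ 2 + 1 :=
  stmt4_general c₀ hc1
end

section
/- The function f(x) = (sin x)^{-2} + 1 - x^{-2} - (π-x)^{-2} on (0,π) attains its minimum precisely at x = π/2, and the minimum value equals 2 - 8/π². -/
/-!
Differentiating the Mittag-Leffler expansion of the cotangent termwise gives
`π² / sin² (π x) = ∑_{n ∈ ℤ} 1 / (x - n)²`. Removing the terms `n = 0, 1` and pairing `n = -m`
with `n = m + 1` shows that, for `0 < x < 1`,
`π² (f (π x) - 1) = ∑_{m ≥ 1} (1 / (m + x)² + 1 / (m + 1 - x)²)`.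
By strict convexity of `t ↦ 1 / t²`, every summand is strictly smallest at `x = 1 / 2`.
-/

open Set

theorem eight_div_sq_add_lt_one_div_sq_add_one_div_sq {a b : ℝ} (ha : 0 < a) (hb : 0 < b)
    (hab : a ≠ b) : 8 / (a + b) ^ 2 < 1 / a ^ 2 + 1 / b ^ 2 := by
  rw [div_add_div _ _ (by positivity) (by positivity),
    div_lt_div_iff₀ (by positivity) (by positivity)]
  have hd : 0 < (a - b) ^ 2 := by positivity
  nlinarith [mul_pos ha hb, mul_pos hd (mul_pos ha hb), mul_pos hd hd]

namespace Real

theorem hasSum_pi_mul_cot_sub_inv {x : ℝ} (hx : ∀ n : ℤ, x ≠ n) :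
    HasSum (fun n : ℕ => 1 / (x - (n + 1)) + 1 / (x + (n + 1)))
      (π * (cos (π * x) / sin (π * x)) - 1 / x) := by
  have hz : (x : ℂ) ∈ Complex.integerComplement := by
    rintro ⟨n, hn⟩
    exact hx n (by exact_mod_cast hn.symm)
  have h := (summable_cotTerm hz).hasSum
  rw [← cot_series_rep' hz, Complex.cot_eq_cos_div_sin] at h
  rw [← Complex.hasSum_ofReal]
  push_cast
  exact h

theorem hasSum_pi_mul_cot_sub_of_mem_Ioo {x : ℝ} (hx : x ∈ Ioo (0 : ℝ) 1) :
    HasSum (fun n : ℕ => (x - (n + 2))⁻¹ + (x + (n + 2))⁻¹)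
      (π * (cos (π * x) / sin (π * x)) - x⁻¹ - ((x - 1)⁻¹ + (x + 1)⁻¹)) := by
  obtain ⟨hx0, hx1⟩ := hx
  have hint : ∀ n : ℤ, x ≠ n := by
    rintro n rfl
    have h0 : (0 : ℤ) < n := by exact_mod_cast hx0
    have h1 : n < 1 := by exact_mod_cast hx1
    omega
  have h := (hasSum_nat_add_iff' 1).mpr (hasSum_pi_mul_cot_sub_inv hint)
  simp only [Finset.sum_range_one, Nat.cast_add, Nat.cast_one, Nat.cast_zero] at h
  convert h using 1
  · rfl
  · ext n; ring_nf
  · ring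

theorem hasDerivAt_pi_mul_cot_pi_mul {x : ℝ} (hx : sin (π * x) ≠ 0) :
    HasDerivAt (fun y => π * (cos (π * y) / sin (π * y))) (-(π ^ 2 / sin (π * x) ^ 2)) x := by
  have hlin : HasDerivAt (fun y => π * y) π x := by simpa using (hasDerivAt_id x).const_mul π
  refine ((hlin.cos.fun_div hlin.sin hx).const_mul π).congr_deriv ?_
  field_simp
  linear_combination -sin_sq_add_cos_sq (π * x)

theorem one_div_sq_sub_add_one_div_sq_add_le {x : ℝ} (hx : x ∈ Ioo (0 : ℝ) 1) (n : ℕ) :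
    1 / (x - (n + 2)) ^ 2 + 1 / (x + (n + 2)) ^ 2 ≤ 2 / ((n : ℝ) + 1) ^ 2 := by
  obtain ⟨h0, h1⟩ := hx
  have hn : (0 : ℝ) < n + 1 := by positivity
  have ha : 1 / (x - (n + 2)) ^ 2 ≤ 1 / ((n : ℝ) + 1) ^ 2 :=
    one_div_le_one_div_of_le (by positivity) (by nlinarith)
  have hb : 1 / (x + (n + 2)) ^ 2 ≤ 1 / ((n : ℝ) + 1) ^ 2 :=
    one_div_le_one_div_of_le (by positivity) (by nlinarith)
  linarith [show 2 / ((n : ℝ) + 1) ^ 2 = 1 / ((n : ℝ) + 1) ^ 2 + 1 / ((n : ℝ) + 1) ^ 2 by ring]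

theorem hasSum_pi_sq_div_sin_sq_sub {x : ℝ} (hx : x ∈ Ioo (0 : ℝ) 1) :
    HasSum (fun n : ℕ => 1 / (x - (n + 1)) ^ 2 + 1 / (x + (n + 1)) ^ 2)
      (π ^ 2 / sin (π * x) ^ 2 - 1 / x ^ 2) := by
  obtain ⟨hx0, hx1⟩ := hx
  have hsin : sin (π * x) ≠ 0 :=
    (sin_pos_of_pos_of_lt_pi (by nlinarith [pi_pos]) (by nlinarith [pi_pos])).ne'
  have hu : Summable fun n : ℕ => 2 / ((n : ℝ) + 1) ^ 2 := by
    simpa [div_eq_mul_inv] using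
      ((summable_nat_add_iff 1).mpr (summable_one_div_nat_pow.mpr one_lt_two)).mul_left (2 : ℝ)
  have hbound : ∀ (n : ℕ), ∀ y ∈ Ioo (0 : ℝ) 1,
      ‖-(1 / (y - (n + 2)) ^ 2 + 1 / (y + (n + 2)) ^ 2)‖ ≤ 2 / ((n : ℝ) + 1) ^ 2 := by
    intro n y hy
    rw [norm_neg, norm_of_nonneg (by positivity)]
    exact one_div_sq_sub_add_one_div_sq_add_le hy n
  -- The term `n = 0` of the cotangent series has a pole at `1`, so it is differentiated
  -- separately: the remaining terms have derivatives bounded uniformly on `(0, 1)`.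
  have hderiv := hasDerivAt_tsum_of_isPreconnected (t := Ioo (0 : ℝ) 1) hu isOpen_Ioo
    isPreconnected_Ioo
    (g := fun (n : ℕ) (y : ℝ) => (y - (n + 2))⁻¹ + (y + (n + 2))⁻¹)
    (g' := fun (n : ℕ) (y : ℝ) => -(1 / (y - (n + 2)) ^ 2 + 1 / (y + (n + 2)) ^ 2))
    (fun n y hy => by
      refine ((((hasDerivAt_id' y).sub_const _).fun_inv ?_).add
        (((hasDerivAt_id' y).add_const _).fun_inv ?_)).congr_deriv (by ring)
      · linarith [hy.2]
      · linarith [hy.1, show (0 : ℝ) ≤ n from n.cast_nonneg])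
    hbound ⟨hx0, hx1⟩ (hasSum_pi_mul_cot_sub_of_mem_Ioo ⟨hx0, hx1⟩).summable ⟨hx0, hx1⟩
  have hcot := ((hasDerivAt_pi_mul_cot_pi_mul hsin).sub (hasDerivAt_inv hx0.ne')).sub
    ((((hasDerivAt_id' x).sub_const 1).fun_inv (by linarith : x - 1 ≠ 0)).add
      (((hasDerivAt_id' x).add_const 1).fun_inv (by linarith : x + 1 ≠ 0)))
  have heq := hderiv.unique (hcot.congr_of_eventuallyEq <|
    Filter.eventually_of_mem (isOpen_Ioo.mem_nhds ⟨hx0, hx1⟩) fun y hy =>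
      (hasSum_pi_mul_cot_sub_of_mem_Ioo hy).tsum_eq)
  have hsum := (hu.of_norm_bounded fun n => hbound n x ⟨hx0, hx1⟩).hasSum
  rw [heq] at hsum
  rw [← hasSum_nat_add_iff' 1]
  simp only [Finset.sum_range_one, Nat.cast_add, Nat.cast_one, Nat.cast_zero]
  convert hsum.neg using 1
  · ext n; ring_nf
  · ring

theorem hasSum_pi_sq_div_sin_sq_sub_sub {x : ℝ} (hx : x ∈ Ioo (0 : ℝ) 1) :
    HasSum (fun n : ℕ => 1 / (n + 1 + x) ^ 2 + 1 / (n + 1 + (1 - x)) ^ 2)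
      (π ^ 2 / sin (π * x) ^ 2 - 1 / x ^ 2 - 1 / (1 - x) ^ 2) := by
  have h := hasSum_pi_sq_div_sin_sq_sub hx
  have hB : Summable fun n : ℕ => 1 / (x + (n + 1)) ^ 2 :=
    h.summable.of_nonneg_of_le (fun n => by positivity)
      fun n => le_add_of_nonneg_left (by positivity)
  have hA := h.sub hB.hasSum
  simp only [add_sub_cancel_right] at hA
  convert hB.hasSum.add ((hasSum_nat_add_iff' 1).mpr hA) using 1
  · ext n; push_cast; ring_nf
  · simp only [Finset.sum_range_one, Nat.cast_zero]; ring

theorem pi_sq_sub_eight_lt {x : ℝ} (hx : x ∈ Ioo (0 : ℝ) 1) (hx' : x ≠ 1 / 2) :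
    π ^ 2 - 8 < π ^ 2 / sin (π * x) ^ 2 - 1 / x ^ 2 - 1 / (1 - x) ^ 2 := by
  have hhalf := hasSum_pi_sq_div_sin_sq_sub_sub (x := 1 / 2) ⟨by norm_num, by norm_num⟩
  have hlt : ∀ n : ℕ, 1 / ((n : ℝ) + 1 + 1 / 2) ^ 2 + 1 / ((n : ℝ) + 1 + (1 - 1 / 2)) ^ 2 <
      1 / (n + 1 + x) ^ 2 + 1 / (n + 1 + (1 - x)) ^ 2 := by
    intro n
    have h := eight_div_sq_add_lt_one_div_sq_add_one_div_sq (a := n + 1 + x)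
      (b := n + 1 + (1 - x)) (by linarith [hx.1]) (by linarith [hx.2])
      (fun h => hx' (by linarith))
    rw [show (n : ℝ) + 1 + x + (n + 1 + (1 - x)) = 2 * (n + 1 + 1 / 2) by ring] at h
    convert h using 1
    field_simp
    ring
  calc π ^ 2 - 8 = π ^ 2 / sin (π * (1 / 2)) ^ 2 - 1 / (1 / 2) ^ 2 - 1 / (1 - 1 / 2) ^ 2 := by
        rw [show π * (1 / 2) = π / 2 by ring, sin_pi_div_two]; norm_num; ring
    _ < _ := hasSum_lt (fun n => (hlt n).le) (hlt 0) hhalf (hasSum_pi_sq_div_sin_sq_sub_sub hx)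

theorem one_sub_eight_div_pi_sq_lt {y : ℝ} (hy : y ∈ Ioo 0 π) (hy' : y ≠ π / 2) :
    1 - 8 / π ^ 2 < 1 / sin y ^ 2 - 1 / y ^ 2 - 1 / (π - y) ^ 2 := by
  obtain ⟨hy0, hyπ⟩ := hy
  have hπ := pi_pos
  have h := pi_sq_sub_eight_lt (x := y / π) ⟨by positivity, (div_lt_one hπ).mpr hyπ⟩
    (fun h => hy' (by field_simp at h; linarith))
  have e : π ^ 2 / sin (π * (y / π)) ^ 2 - 1 / (y / π) ^ 2 - 1 / (1 - y / π) ^ 2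
      = π ^ 2 * (1 / sin y ^ 2 - 1 / y ^ 2 - 1 / (π - y) ^ 2) := by
    have : π - y ≠ 0 := by linarith
    rw [mul_div_cancel₀ _ hπ.ne']
    field_simp
  rw [e, ← div_lt_iff₀' (by positivity)] at h
  calc 1 - 8 / π ^ 2 = (π ^ 2 - 8) / π ^ 2 := by field_simp
    _ < _ := h

end Real

/-- The function `f(x) = (sin x)⁻² + 1 - x⁻² - (π-x)⁻²` on `(0,π)` attains its
minimum precisely at `x = π/2`, with minimum value `2 - 8/π²`. -/
theorem stmt5 (f : ℝ → ℝ)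
    (hf : ∀ x, f x = 1 / Real.sin x ^ 2 + 1 - 1 / x ^ 2 - 1 / (Real.pi - x) ^ 2) :
    f (Real.pi / 2) = 2 - 8 / Real.pi ^ 2 ∧
    (∀ x ∈ Ioo (0 : ℝ) Real.pi, f (Real.pi / 2) ≤ f x) ∧
    (∀ x ∈ Ioo (0 : ℝ) Real.pi, x ≠ Real.pi / 2 → f (Real.pi / 2) < f x) := by
  have hval : f (Real.pi / 2) = 2 - 8 / Real.pi ^ 2 := by
    rw [hf, show Real.pi - Real.pi / 2 = Real.pi / 2 by ring, Real.sin_pi_div_two]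
    field_simp
    ring
  have hlt : ∀ x ∈ Ioo (0 : ℝ) Real.pi, x ≠ Real.pi / 2 → f (Real.pi / 2) < f x := by
    intro x hx hne
    rw [hval, hf]
    linarith [Real.one_sub_eight_div_pi_sq_lt hx hne]
  refine ⟨hval, fun x hx => ?_, hlt⟩
  rcases eq_or_ne x (Real.pi / 2) with rfl | hne
  · exact le_rfl
  · exact (hlt x hx hne).le
end

section
/- For f locally absolutely continuous on (a,b) with f, α_{s_a}f ∈ L²((a,b);dx) where α_{s_a}f = f' - (s_a+1/2)(x-a)^{-1} f and s_a ∈ (-∞,-1], the limit F := lim_{c→a⁺} (c-a)^{-s_a-1/2} f(c) exists, F = 0, and lim_{x→a⁺} f(x)/(x-a)^{1/2} = 0. -/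
/-
With `p = -s - 1/2 ≥ 1/2`, the function `h = (x - a)^p f` has derivative `(x - a)^p α_s f`.
Since `(x - a)^(-2p)` is not integrable at `a` while `|f|²` is, `h` takes arbitrarily small
values near `a`; integrating `h'` from such points and applying Cauchy–Schwarz gives
`(x - a)^p |f x| ≤ (x - a)^(p + 1/2) (2p + 1)^(-1/2) ‖α_s f‖_{L²(a,x)}`,
and the last factor tends to `0` as `x → a⁺`.
-/

open MeasureTheory Set Filter Topology

theorem norm_integral_mul_le_sqrt_mul_sqrt {α 𝕜 : Type*} [MeasurableSpace α] [RCLike 𝕜]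
    {μ : Measure α} {F G : α → 𝕜} (hF : MemLp F 2 μ) (hG : MemLp G 2 μ) :
    ‖∫ t, F t * G t ∂μ‖ ≤ √(∫ t, ‖F t‖ ^ 2 ∂μ) * √(∫ t, ‖G t‖ ^ 2 ∂μ) := by
  have holder := integral_mul_norm_le_Lp_mul_Lq Real.HolderConjugate.two_two
    (by simpa using hF) (by simpa using hG)
  simp only [Real.rpow_two, ← Real.sqrt_eq_rpow] at holder
  calc ‖∫ t, F t * G t ∂μ‖ ≤ ∫ t, ‖F t * G t‖ ∂μ := norm_integral_le_integral_norm _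
    _ = ∫ t, ‖F t‖ * ‖G t‖ ∂μ := by simp only [norm_mul]
    _ ≤ _ := holder

theorem norm_le_of_hasDerivAt_mul {𝕜 : Type*} [RCLike 𝕜] {h w g : ℝ → 𝕜} {a x : ℝ}
    (hderiv : ∀ t ∈ Ioc a x, HasDerivAt h (w t * g t) t)
    (hw : MemLp w 2 (volume.restrict (Ioc a x))) (hg : MemLp g 2 (volume.restrict (Ioc a x)))
    (hsmall : ∀ δ > 0, ∃ c ∈ Ioo a x, ‖h c‖ < δ) :
    ‖h x‖ ≤ √(∫ t in Ioc a x, ‖w t‖ ^ 2) * √(∫ t in Ioc a x, ‖g t‖ ^ 2) := by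
  refine le_of_forall_pos_le_add fun δ hδ => ?_
  obtain ⟨c, hc, hhc⟩ := hsmall δ hδ
  have hsub : Ioc c x ⊆ Ioc a x := Ioc_subset_Ioc_left hc.1.le
  have hwc := hw.mono_measure (Measure.restrict_mono hsub le_rfl)
  have hgc := hg.mono_measure (Measure.restrict_mono hsub le_rfl)
  have hftc : h x - h c = ∫ t in Ioc c x, w t * g t := by
    rw [← intervalIntegral.integral_of_le hc.2.le]
    refine (intervalIntegral.integral_eq_sub_of_hasDerivAt (fun t ht => hderiv t ?_)
      ((intervalIntegrable_iff_integrableOn_Ioc_of_le hc.2.le).2 (hwc.integrable_mul hgc))).symm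
    rw [uIcc_of_le hc.2.le] at ht
    exact ⟨hc.1.trans_le ht.1, ht.2⟩
  have hmono {u : ℝ → 𝕜} (hu : MemLp u 2 (volume.restrict (Ioc a x))) :
      √(∫ t in Ioc c x, ‖u t‖ ^ 2) ≤ √(∫ t in Ioc a x, ‖u t‖ ^ 2) :=
    Real.sqrt_le_sqrt (setIntegral_mono_set (hu.integrable_norm_pow two_ne_zero)
      (Eventually.of_forall fun t => by positivity) hsub.eventuallyLE)
  calc ‖h x‖ ≤ ‖h x - h c‖ + ‖h c‖ := norm_le_norm_sub_add _ _
    _ ≤ √(∫ t in Ioc a x, ‖w t‖ ^ 2) * √(∫ t in Ioc a x, ‖g t‖ ^ 2) + δ := by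
      rw [hftc]
      gcongr
      exact (norm_integral_mul_le_sqrt_mul_sqrt hwc hgc).trans
        (mul_le_mul (hmono hw) (hmono hg) (Real.sqrt_nonneg _) (Real.sqrt_nonneg _))

theorem integral_sub_rpow {a x r : ℝ} (hr : -1 < r) :
    ∫ t in a..x, (t - a) ^ r = (x - a) ^ (r + 1) / (r + 1) := by
  rw [intervalIntegral.integral_comp_sub_right (fun u => u ^ r), sub_self,
    integral_rpow (Or.inl hr), Real.zero_rpow (by linarith), sub_zero]

theorem not_integrableOn_Ioo_sub_rpow {a x r : ℝ} (hax : a < x) (hr : r ≤ -1) :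
    ¬ IntegrableOn (fun t => (t - a) ^ r) (Ioo a x) := by
  rw [← intervalIntegrable_iff_integrableOn_Ioo_of_le hax.le]
  intro h
  have := h.comp_add_right a
  simp only [add_sub_cancel_right, sub_self] at this
  rw [intervalIntegrable_iff_integrableOn_Ioo_of_le (by linarith),
    intervalIntegral.integrableOn_Ioo_rpow_iff (by linarith)] at this
  linarith

theorem exists_mem_Ioo_rpow_mul_norm_lt {E : Type*} [NormedAddCommGroup E] {a x p δ : ℝ}
    {f : ℝ → E} (hp : 1 ≤ 2 * p) (hax : a < x)
    (hf : IntegrableOn (fun t => ‖f t‖ ^ 2) (Ioo a x)) (hδ : 0 < δ) :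
    ∃ c ∈ Ioo a x, (c - a) ^ p * ‖f c‖ < δ := by
  by_contra! hlarge
  refine not_integrableOn_Ioo_sub_rpow hax (by linarith : -(2 * p) ≤ -1) ?_
  refine (hf.const_mul (δ ^ 2)⁻¹).mono' ?_ ?_
  · exact (ContinuousOn.rpow_const (continuousOn_id.sub continuousOn_const)
      (fun c hc => Or.inl (sub_pos.2 hc.1).ne')).aestronglyMeasurable measurableSet_Ioo
  · filter_upwards [ae_restrict_mem measurableSet_Ioo] with c hc
    have hca : 0 < c - a := sub_pos.2 hc.1
    have hsq : δ ^ 2 ≤ (c - a) ^ (2 * p) * ‖f c‖ ^ 2 := by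
      rw [mul_comm 2 p, Real.rpow_mul hca.le, Real.rpow_two, ← mul_pow]
      exact pow_le_pow_left₀ hδ.le (hlarge c hc) 2
    rw [Real.norm_of_nonneg (by positivity), Real.rpow_neg hca.le, le_inv_mul_iff₀ (by positivity),
      mul_inv_le_iff₀ (by positivity)]
    linarith

theorem HasDerivAt.sub_rpow_mul {f : ℝ → ℂ} {f' : ℂ} {a p t : ℝ} (hf : HasDerivAt f f' t)
    (ht : a < t) :
    HasDerivAt (fun x => (((x - a) ^ p : ℝ) : ℂ) * f x)
      ((((t - a) ^ p : ℝ) : ℂ) * (f' + ((p / (t - a) : ℝ) : ℂ) * f t)) t := by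
  have hta : t - a ≠ 0 := (sub_pos.2 ht).ne'
  have hw := (((hasDerivAt_id t).sub_const a).rpow_const (p := p) (Or.inl hta)).ofReal_comp
  refine HasDerivAt.congr_deriv (hw.mul hf) ?_
  simp only [id]
  rw [Real.rpow_sub_one hta]
  push_cast
  field_simp
  ring

theorem norm_le_sqrt_mul_sqrt_integral {f f' : ℝ → ℂ} {a x p : ℝ} (hp : 1 ≤ 2 * p) (hax : a < x)
    (hderiv : ∀ t ∈ Ioc a x, HasDerivAt f (f' t) t)
    (hf : IntegrableOn (fun t => ‖f t‖ ^ 2) (Ioc a x))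
    (hg : MemLp (fun t => f' t + ((p / (t - a) : ℝ) : ℂ) * f t) 2 (volume.restrict (Ioc a x))) :
    ‖f x‖ ≤ √(x - a) *
      √((∫ t in Ioc a x, ‖f' t + ((p / (t - a) : ℝ) : ℂ) * f t‖ ^ 2) / (2 * p + 1)) := by
  set w : ℝ → ℂ := fun t => (((t - a) ^ p : ℝ) : ℂ)
  have hnorm_w {t : ℝ} (ht : a ≤ t) : ‖w t‖ = (t - a) ^ p := by
    simp [w, Real.rpow_nonneg (sub_nonneg.2 ht)]
  have hw_sq : ∀ t ∈ Ioc a x, ‖w t‖ ^ 2 = (t - a) ^ (2 * p) := fun t ht => by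
    rw [hnorm_w ht.1.le, mul_comm, Real.rpow_mul (sub_nonneg.2 ht.1.le), Real.rpow_two]
  have hw_int : ∫ t in Ioc a x, ‖w t‖ ^ 2 = (x - a) ^ (2 * p + 1) / (2 * p + 1) := by
    rw [setIntegral_congr_fun measurableSet_Ioc hw_sq, ← intervalIntegral.integral_of_le hax.le,
      integral_sub_rpow (by linarith)]
  have hw_cont : Continuous w := Complex.continuous_ofReal.comp
    ((continuous_id.sub continuous_const).rpow_const fun _ => Or.inr (by linarith))
  have hwL2 : MemLp w 2 (volume.restrict (Ioc a x)) :=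
    (memLp_two_iff_integrable_sq_norm hw_cont.aestronglyMeasurable).2
      (hw_cont.norm.pow 2).integrableOn_Ioc
  have key := norm_le_of_hasDerivAt_mul (h := fun t => w t * f t)
    (fun t ht => (hderiv t ht).sub_rpow_mul ht.1) hwL2 hg fun δ hδ => by
      obtain ⟨c, hc, hlt⟩ :=
        exists_mem_Ioo_rpow_mul_norm_lt hp hax (hf.mono_set Ioo_subset_Ioc_self) hδ
      exact ⟨c, hc, by rwa [norm_mul, hnorm_w hc.1.le]⟩
  have hxa : 0 < x - a := sub_pos.2 hax
  set E := ∫ t in Ioc a x, ‖f' t + ((p / (t - a) : ℝ) : ℂ) * f t‖ ^ 2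
  have hE : 0 ≤ E := setIntegral_nonneg measurableSet_Ioc fun _ _ => by positivity
  have hsplit : √((x - a) ^ (2 * p + 1) / (2 * p + 1)) * √E =
      (x - a) ^ p * (√(x - a) * √(E / (2 * p + 1))) := by
    calc _ = √(((x - a) ^ p) ^ 2 * ((x - a) * (E / (2 * p + 1)))) := by
          rw [← Real.sqrt_mul (by positivity), Real.rpow_add hxa, Real.rpow_one, mul_comm 2 p,
            Real.rpow_mul hxa.le, Real.rpow_two]
          ring_nf
      _ = _ := by
          rw [Real.sqrt_mul (by positivity), Real.sqrt_sq (by positivity), Real.sqrt_mul hxa.le]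
  rw [hw_int, norm_mul, hnorm_w hax.le, hsplit] at key
  exact le_of_mul_le_mul_left key (Real.rpow_pos_of_pos hxa p)

theorem aestronglyMeasurable_restrict_of_hasDerivAt {E : Type*} [NormedAddCommGroup E]
    [NormedSpace ℝ E] [CompleteSpace E] {f f' : ℝ → E} {s : Set ℝ} (hs : MeasurableSet s)
    (hderiv : ∀ x ∈ s, HasDerivAt f (f' x) x) : AEStronglyMeasurable f' (volume.restrict s) :=
  (aestronglyMeasurable_deriv f _).congr <|
    (ae_restrict_iff' hs).2 <| Eventually.of_forall fun x hx => (hderiv x hx).deriv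

theorem tendsto_setIntegral_Ioc_nhdsGT {E : Type*} [NormedAddCommGroup E] [NormedSpace ℝ E]
    {G : ℝ → E} {a b : ℝ} (hab : a < b) (hG : IntegrableOn G (Ioc a b)) :
    Tendsto (fun x => ∫ t in Ioc a x, G t) (𝓝[>] a) (𝓝 0) := by
  have hcont := intervalIntegral.continuousOn_primitive_interval' (a := a)
    ((intervalIntegrable_iff_integrableOn_Ioc_of_le hab.le).2 hG) left_mem_uIcc
  have hlim := ((hcont a left_mem_uIcc).mono_of_mem_nhdsWithin
    (by rw [uIcc_of_le hab.le]; exact Icc_mem_nhdsGT hab)).tendsto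
  rw [intervalIntegral.integral_same] at hlim
  refine hlim.congr' ?_
  filter_upwards [self_mem_nhdsWithin] with x hx
  exact intervalIntegral.integral_of_le (le_of_lt hx)

section

variable {f : ℝ → ℂ} {K : ℝ → ℝ} {a r : ℝ}

theorem tendsto_div_rpow_of_norm_le (hK : Tendsto K (𝓝[>] a) (𝓝 0))
    (hf : ∀ᶠ x in 𝓝[>] a, ‖f x‖ ≤ (x - a) ^ r * K x) :
    Tendsto (fun x => f x / (((x - a) ^ r : ℝ) : ℂ)) (𝓝[>] a) (𝓝 0) := by
  refine squeeze_zero_norm' ?_ hK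
  filter_upwards [hf, self_mem_nhdsWithin] with x hfx hx
  have hxr : 0 < (x - a) ^ r := Real.rpow_pos_of_pos (sub_pos.2 hx) r
  rw [norm_div, Complex.norm_real, Real.norm_of_nonneg hxr.le, div_le_iff₀ hxr, mul_comm]
  exact hfx

theorem tendsto_rpow_mul_of_norm_le {q : ℝ} (hqr : 0 < q + r) (hK : Tendsto K (𝓝[>] a) (𝓝 0))
    (hf : ∀ᶠ x in 𝓝[>] a, ‖f x‖ ≤ (x - a) ^ r * K x) :
    Tendsto (fun x => (((x - a) ^ q : ℝ) : ℂ) * f x) (𝓝[>] a) (𝓝 0) := by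
  have hpow : Tendsto (fun x => (x - a) ^ (q + r)) (𝓝[>] a) (𝓝 0) := by
    have hsub : Tendsto (fun x => x - a) (𝓝[>] a) (𝓝 0) :=
      tendsto_sub_nhds_zero_iff.2 nhdsWithin_le_nhds
    simpa [Function.comp_def, Real.zero_rpow hqr.ne'] using
      (Real.continuousAt_rpow_const 0 (q + r) (Or.inr hqr.le)).tendsto.comp hsub
  refine squeeze_zero_norm' ?_ (by simpa using hpow.mul hK)
  filter_upwards [hf, self_mem_nhdsWithin] with x hfx hx
  have hxa : 0 < x - a := sub_pos.2 hx
  rw [norm_mul, Complex.norm_real, Real.norm_of_nonneg (Real.rpow_nonneg hxa.le q),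
    Real.rpow_add hxa, mul_assoc]
  exact mul_le_mul_of_nonneg_left hfx (Real.rpow_nonneg hxa.le q)

end

/-- For `s_a ≤ -1` and `f` locally absolutely continuous on `(a,b)` with
`f, α_{s_a} f ∈ L²`, the limit `F = lim_{c→a⁺} (c-a)^{-s_a-1/2} f(c)` exists,
equals `0`, and `f(x)/(x-a)^{1/2} → 0` as `x → a⁺`. -/
theorem stmt6 (a b s : ℝ) (hab : a < b) (hs : s ≤ -1)
    (f f' : ℝ → ℂ)
    (hderiv : ∀ x ∈ Ioo a b, HasDerivAt f (f' x) x)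
    (hfL2 : IntegrableOn (fun x => ‖f x‖ ^ 2) (Ioo a b))
    (hαL2 : IntegrableOn
      (fun x => ‖f' x - (((s + 1/2) / (x - a) : ℝ) : ℂ) * f x‖ ^ 2) (Ioo a b)) :
    Tendsto (fun c => (((c - a) ^ (-s - 1/2 : ℝ) : ℝ) : ℂ) * f c)
      (nhdsWithin a (Ioi a)) (nhds 0) ∧
    Tendsto (fun x => f x / (((x - a) ^ ((1 : ℝ)/2) : ℝ) : ℂ))
      (nhdsWithin a (Ioi a)) (nhds 0) := by
  set p := -s - 1/2 with hp_def
  have hp : 1 ≤ 2 * p := by linarith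
  set g : ℝ → ℂ := fun t => f' t + ((p / (t - a) : ℝ) : ℂ) * f t
  have hαg : ∀ x, f' x - (((s + 1/2) / (x - a) : ℝ) : ℂ) * f x = g x := fun x => by
    simp only [g, hp_def]; push_cast; ring
  simp only [hαg] at hαL2
  have hf_cont : ContinuousOn f (Ioo a b) := fun x hx =>
    (hderiv x hx).continuousAt.continuousWithinAt
  have hg_meas : AEStronglyMeasurable g (volume.restrict (Ioo a b)) :=
    (aestronglyMeasurable_restrict_of_hasDerivAt measurableSet_Ioo hderiv).add <|
      (by fun_prop : Measurable fun t => ((p / (t - a) : ℝ) : ℂ)).aestronglyMeasurable.mul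
        (hf_cont.aestronglyMeasurable measurableSet_Ioo)
  have hgL2 : MemLp g 2 (volume.restrict (Ioo a b)) :=
    (memLp_two_iff_integrable_sq_norm hg_meas).2 hαL2
  set K : ℝ → ℝ := fun x => √((∫ t in Ioc a x, ‖g t‖ ^ 2) / (2 * p + 1))
  have hK : Tendsto K (𝓝[>] a) (𝓝 0) := by
    simpa using ((tendsto_setIntegral_Ioc_nhdsGT hab
      (hαL2.congr_set_ae Ioo_ae_eq_Ioc.symm)).div_const (2 * p + 1)).sqrt
  have hbound : ∀ᶠ x in 𝓝[>] a, ‖f x‖ ≤ (x - a) ^ ((1 : ℝ) / 2) * K x := by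
    filter_upwards [Ioo_mem_nhdsGT hab] with x hx
    have hsub : Ioc a x ⊆ Ioo a b := Ioc_subset_Ioo_right hx.2
    rw [← Real.sqrt_eq_rpow]
    exact norm_le_sqrt_mul_sqrt_integral hp hx.1 (fun t ht => hderiv t (hsub ht))
      (hfL2.mono_set hsub) (hgL2.mono_measure (Measure.restrict_mono hsub le_rfl))
  exact ⟨tendsto_rpow_mul_of_norm_le (by linarith) hK hbound,
    tendsto_div_rpow_of_norm_le hK hbound⟩
end

section
/- Suppose f is locally absolutely continuous on (a,b) with α_{s_a}f ∈ L²((a,b);dx) for some s_a ∈ (0,∞). Then ∫_a^{r₁} |f'(x)|² dx < ∞, ∫_a^{r₁} |f(x)|²/(x-a)² dx < ∞, and lim_{x→a⁺} f(x)/(x-a)^{1/2} = 0 for any r₁ ∈ (a,b]. -/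
open MeasureTheory Set Filter
open scoped ENNReal NNReal

lemma lint_rpow {a α β p : ℝ} (hp : p ≠ -1) (haα : a ≤ α) (hαβ : α < β)
    (h0 : a < α ∨ -1 < p) :
    ∫⁻ x in Ioo α β, ENNReal.ofReal ((x-a)^p) =
      ENNReal.ofReal (((β-a)^(p+1) - (α-a)^(p+1))/(p+1)) := by
  have hint : IntervalIntegrable (fun x => (x-a)^p) volume α β := by
    rcases h0 with h | h
    · apply ContinuousOn.intervalIntegrable
      apply ContinuousOn.rpow_const
      · fun_prop
      · intro x hx
        rw [uIcc_of_le hαβ.le] at hx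
        exact Or.inl (ne_of_gt (by linarith [hx.1] : (0:ℝ) < x - a))
    · have := intervalIntegral.intervalIntegrable_rpow' (a := α - a) (b := β - a) h
      have h2 := this.comp_sub_right a
      simpa using h2
  have hIcc : IntegrableOn (fun x => (x-a)^p) (Ioc α β) volume := by
    rw [← uIoc_of_le hαβ.le]; exact hint.def'
  have harg : (-1 < p) ∨ (p ≠ -1 ∧ (0:ℝ) ∉ uIcc (α - a) (β - a)) := by
    rcases h0 with h | h
    · refine Or.inr ⟨hp, ?_⟩
      rw [uIcc_of_le (by linarith : α - a ≤ β - a)]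
      intro hc
      have := hc.1
      linarith
    · exact Or.inl h
  have hval : ∫ x in α..β, (x-a)^p = ((β-a)^(p+1) - (α-a)^(p+1))/(p+1) := by
    have h2 := integral_rpow (a := α - a) (b := β - a) harg
    rw [intervalIntegral.integral_comp_sub_right (fun x => x ^ p) a, h2]
  have hnn : 0 ≤ᶠ[ae (volume.restrict (Ioc α β))] (fun x => (x-a)^p) := by
    filter_upwards [ae_restrict_mem measurableSet_Ioc] with x hx
    have : 0 ≤ x - a := by have := hx.1; linarith
    positivity
  have hres : volume.restrict (Ioo α β) = volume.restrict (Ioc α β) :=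
    Measure.restrict_congr_set Ioo_ae_eq_Ioc
  calc ∫⁻ x in Ioo α β, ENNReal.ofReal ((x-a)^p)
      = ∫⁻ x in Ioc α β, ENNReal.ofReal ((x-a)^p) := by rw [hres]
    _ = ENNReal.ofReal (∫ x in Ioc α β, (x-a)^p) := by
        rw [ofReal_integral_eq_lintegral_ofReal hIcc hnn]
    _ = ENNReal.ofReal (((β-a)^(p+1) - (α-a)^(p+1))/(p+1)) := by
        rw [← intervalIntegral.integral_of_le hαβ.le, hval]

lemma swap_lemma {α γ : ℝ} (F G : ℝ → ℝ≥0∞) (hF : Measurable F) (hG : Measurable G) :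
    ∫⁻ x in Ioo α γ, F x * ∫⁻ t in Ioo x γ, G t =
      ∫⁻ t in Ioo α γ, (∫⁻ x in Ioo α t, F x) * G t := by
  have hsetmeas : MeasurableSet {q : ℝ × ℝ | q.1 < q.2} :=
    measurableSet_lt measurable_fst measurable_snd
  have hind : Measurable fun q : ℝ × ℝ => {q : ℝ × ℝ | q.1 < q.2}.indicator (fun q => G q.2) q :=
    (hG.comp measurable_snd).indicator hsetmeas
  set Ψ : ℝ → ℝ → ℝ≥0∞ :=
    fun x t => F x * ({q : ℝ × ℝ | q.1 < q.2}.indicator (fun q => G q.2) (x, t)) with hΨ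
  have hΨmeas : AEMeasurable (Function.uncurry Ψ)
      ((volume.restrict (Ioo α γ)).prod (volume.restrict (Ioo α γ))) := by
    apply Measurable.aemeasurable
    exact (hF.comp measurable_fst).mul hind
  have step1 : ∀ x ∈ Ioo α γ, F x * (∫⁻ t in Ioo x γ, G t) = ∫⁻ t in Ioo α γ, Ψ x t := by
    intro x hx
    have e1 : ∀ t, ({q : ℝ × ℝ | q.1 < q.2}.indicator (fun q => G q.2) (x, t)) =
        (Ioi x).indicator G t := by
      intro t
      by_cases h : x < t
      · rw [indicator_of_mem (by exact h), indicator_of_mem (by exact h)]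
      · rw [indicator_of_notMem (by exact h), indicator_of_notMem (by exact h)]
    have hset : Ioi x ∩ Ioo α γ = Ioo x γ := by
      ext u
      simp only [mem_inter_iff, mem_Ioi, mem_Ioo]
      constructor
      · rintro ⟨h1, _, h3⟩; exact ⟨h1, h3⟩
      · rintro ⟨h1, h2⟩; exact ⟨h1, hx.1.trans h1, h2⟩
    have e2 : (∫⁻ t in Ioo x γ, G t) = ∫⁻ t in Ioo α γ, (Ioi x).indicator G t := by
      rw [lintegral_indicator measurableSet_Ioi, Measure.restrict_restrict measurableSet_Ioi, hset]
    rw [e2, ← lintegral_const_mul _ (hG.indicator measurableSet_Ioi)]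
    apply lintegral_congr
    intro t
    simp only [hΨ, e1]
  have step2 : ∀ t ∈ Ioo α γ, (∫⁻ x in Ioo α γ, Ψ x t) = (∫⁻ x in Ioo α t, F x) * G t := by
    intro t ht
    have e1 : ∀ x, Ψ x t = (Iio t).indicator F x * G t := by
      intro x
      by_cases h : x < t
      · simp only [hΨ]
        rw [indicator_of_mem (by exact h) (fun q : ℝ × ℝ => G q.2),
          indicator_of_mem (by exact h) F]
      · simp only [hΨ]
        rw [indicator_of_notMem (by exact h) (fun q : ℝ × ℝ => G q.2),
          indicator_of_notMem (by exact h) F]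
        simp
    simp_rw [e1]
    rw [lintegral_mul_const _ (hF.indicator measurableSet_Iio)]
    have hset : Iio t ∩ Ioo α γ = Ioo α t := by
      ext u
      simp only [mem_inter_iff, mem_Iio, mem_Ioo]
      constructor
      · rintro ⟨h1, h2, _⟩; exact ⟨h2, h1⟩
      · rintro ⟨h1, h2⟩; exact ⟨h2, h1, h2.trans ht.2⟩
    congr 1
    rw [lintegral_indicator measurableSet_Iio, Measure.restrict_restrict measurableSet_Iio, hset]
  calc ∫⁻ x in Ioo α γ, F x * ∫⁻ t in Ioo x γ, G t
      = ∫⁻ x in Ioo α γ, ∫⁻ t in Ioo α γ, Ψ x t := by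
        apply setLIntegral_congr_fun measurableSet_Ioo
        exact fun x hx => step1 x hx
    _ = ∫⁻ t in Ioo α γ, ∫⁻ x in Ioo α γ, Ψ x t := lintegral_lintegral_swap hΨmeas
    _ = ∫⁻ t in Ioo α γ, (∫⁻ x in Ioo α t, F x) * G t := by
        apply setLIntegral_congr_fun measurableSet_Ioo
        exact fun t ht => step2 t ht

lemma CS_lemma {μ : Measure ℝ} (F G : ℝ → ℝ≥0∞) (hF : AEMeasurable F μ) (hG : AEMeasurable G μ) :
    ∫⁻ t, F t * G t ∂μ ≤ (∫⁻ t, F t ^ 2 ∂μ) ^ ((1:ℝ)/2) * (∫⁻ t, G t ^ 2 ∂μ) ^ ((1:ℝ)/2) := by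
  have hconj : (2:ℝ).HolderConjugate 2 := Real.HolderConjugate.two_two
  have := ENNReal.lintegral_mul_le_Lp_mul_Lq μ hconj hF hG
  simp only [Pi.mul_apply] at this
  calc ∫⁻ t, F t * G t ∂μ
      ≤ (∫⁻ t, F t ^ (2:ℝ) ∂μ) ^ ((1:ℝ)/2) * (∫⁻ t, G t ^ (2:ℝ) ∂μ) ^ ((1:ℝ)/2) := this
    _ = (∫⁻ t, F t ^ 2 ∂μ) ^ ((1:ℝ)/2) * (∫⁻ t, G t ^ 2 ∂μ) ^ ((1:ℝ)/2) := by
        congr 1 <;> congr 1 <;> apply lintegral_congr <;> intro t <;>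
          rw [← ENNReal.rpow_natCast] <;> norm_num

lemma sq_sqrt_cancel (x : ℝ≥0∞) : (x ^ ((1:ℝ)/2)) ^ 2 = x := by
  rw [← ENNReal.rpow_natCast (x ^ ((1:ℝ)/2)) 2, ← ENNReal.rpow_mul]
  norm_num

lemma le_one_add_sq (r : ℝ≥0∞) : r ≤ 1 + r ^ 2 := by
  by_cases h : r ≤ 1
  · exact le_add_right h
  · push_neg at h
    have : r = r * 1 := (mul_one r).symm
    calc r = r * 1 := (mul_one r).symm
      _ ≤ r * r := by exact mul_le_mul_right h.le r
      _ = r ^ 2 := (sq r).symm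
      _ ≤ 1 + r ^ 2 := le_add_self

lemma ennreal_bootstrap {I c K : ℝ≥0∞} (hI : I ≠ ⊤) (h : I ≤ c * K ^ ((1:ℝ)/2) * I ^ ((1:ℝ)/2)) :
    I ≤ c ^ 2 * K := by
  by_cases h0 : I = 0
  · simp [h0]
  have hsqrt_ne0 : I ^ ((1:ℝ)/2) ≠ 0 := by
    simp [ENNReal.rpow_eq_zero_iff, h0, hI]
  have hsqrt_netop : I ^ ((1:ℝ)/2) ≠ ⊤ := by
    simp [ENNReal.rpow_eq_top_iff, h0, hI]
  have hI' : I = I ^ ((1:ℝ)/2) * I ^ ((1:ℝ)/2) := by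
    rw [← ENNReal.rpow_add _ _ h0 hI]; norm_num
  nth_rewrite 1 [hI'] at h
  have h2 : I ^ ((1:ℝ)/2) ≤ c * K ^ ((1:ℝ)/2) :=
    (ENNReal.mul_le_mul_iff_left hsqrt_ne0 hsqrt_netop).mp h
  calc I = (I ^ ((1:ℝ)/2)) ^ 2 := (sq_sqrt_cancel I).symm
    _ ≤ (c * K ^ ((1:ℝ)/2)) ^ 2 := by exact pow_le_pow_left' h2 2
    _ = c ^ 2 * K := by rw [mul_pow, sq_sqrt_cancel]

lemma hardy {a c s : ℝ} (hs : 0 < s) (hac : a < c) (k : ℝ → ℝ≥0∞) (hk : Measurable k) :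
    ∫⁻ x in Ioo a c, ENNReal.ofReal ((x-a)^(2*s-1)) *
        (∫⁻ t in Ioo x c, ENNReal.ofReal ((t-a)^(-(s+1/2))) * k t) ^ 2
      ≤ ENNReal.ofReal (1/s^2) * ∫⁻ t in Ioo a c, (k t)^2 := by
  have hwmeas : Measurable (fun t : ℝ => ENNReal.ofReal ((t-a)^(-(s+1/2)))) := by fun_prop
  have hpmeas : Measurable (fun x : ℝ => ENNReal.ofReal ((x-a)^(2*s-1))) := by fun_prop
  set w : ℝ → ℝ≥0∞ := fun t => ENNReal.ofReal ((t-a)^(-(s+1/2))) with hw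
  set p : ℝ → ℝ≥0∞ := fun x => ENNReal.ofReal ((x-a)^(2*s-1)) with hp
  set h : ℝ → ℝ≥0∞ := fun t => w t * k t with hh
  have hhmeas : Measurable h := hwmeas.mul hk
  set B : ℝ → ℝ≥0∞ := fun x => ∫⁻ t in Ioo x c, h t with hB
  have hBanti : Antitone B := fun x y hxy => lintegral_mono_set (Ioo_subset_Ioo_left hxy)
  have hBmeas : Measurable B := hBanti.measurable
  set Φ : ℝ → ℝ≥0∞ := fun x => p x * B x ^ 2 with hΦ
  have hΦmeas : Measurable Φ := hpmeas.mul (hBmeas.pow_const 2)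
  set K := ∫⁻ t in Ioo a c, (k t)^2 with hK
  show ∫⁻ x in Ioo a c, Φ x ≤ ENNReal.ofReal (1/s^2) * K
  by_cases hKtop : K = ⊤
  · rw [hKtop, ENNReal.mul_top (ENNReal.ofReal_pos.mpr (by positivity)).ne']
    exact le_top
  -- value of ∫ p over Ioo a t
  have hpt : ∀ t, a < t → ∫⁻ x in Ioo a t, p x = ENNReal.ofReal ((t-a)^(2*s)/(2*s)) := by
    intro t hat
    rw [hp]
    rw [lint_rpow (by intro hc; linarith : 2*s-1 ≠ -1) le_rfl hat (Or.inr (by linarith))]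
    rw [show 2*s-1+1 = 2*s by ring, sub_self, Real.zero_rpow (by positivity), sub_zero]
  -- finiteness of truncated integral
  have hIfin : ∀ y, a < y → y < c → (∫⁻ x in Ioo y c, Φ x) ≠ ⊤ := by
    intro y hay hyc
    have hBy : B y ≠ ⊤ := by
      have step1 : B y ≤ ENNReal.ofReal ((y-a)^(-(s+1/2))) * ∫⁻ t in Ioo y c, k t := by
        rw [← lintegral_const_mul _ hk]
        apply setLIntegral_mono' measurableSet_Ioo
        intro t ht
        apply mul_le_mul_left
        apply ENNReal.ofReal_le_ofReal
        exact Real.rpow_le_rpow_of_nonpos (by linarith : (0:ℝ) < y - a)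
          (by linarith [ht.1] : y - a ≤ t - a) (by linarith : -(s+1/2) ≤ 0)
      have step2 : ∫⁻ t in Ioo y c, k t ≤ volume (Ioo y c) + K := by
        calc ∫⁻ t in Ioo y c, k t ≤ ∫⁻ t in Ioo y c, 1 + (k t)^2 :=
              lintegral_mono fun t => le_one_add_sq (k t)
          _ = volume (Ioo y c) + ∫⁻ t in Ioo y c, (k t)^2 := by
              rw [lintegral_add_left measurable_const]; simp
          _ ≤ volume (Ioo y c) + K := by
              exact add_le_add_right (lintegral_mono_set (Ioo_subset_Ioo_left hay.le)) _
      apply ne_top_of_le_ne_top _ (step1.trans (mul_le_mul_right step2 _))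
      apply ENNReal.mul_ne_top ENNReal.ofReal_ne_top
      apply ENNReal.add_ne_top.mpr
      exact ⟨(by simp : volume (Ioo y c) ≠ ⊤), hKtop⟩
    have hle : ∫⁻ x in Ioo y c, Φ x ≤ (∫⁻ x in Ioo y c, p x) * B y ^ 2 := by
      calc ∫⁻ x in Ioo y c, Φ x ≤ ∫⁻ x in Ioo y c, p x * B y ^ 2 := by
            apply setLIntegral_mono' measurableSet_Ioo
            intro x hx
            exact mul_le_mul_right (pow_le_pow_left' (hBanti hx.1.le) 2) _
        _ = (∫⁻ x in Ioo y c, p x) * B y ^ 2 := lintegral_mul_const _ hpmeas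
    apply ne_top_of_le_ne_top _ hle
    apply ENNReal.mul_ne_top
    · apply ne_top_of_le_ne_top (b := ∫⁻ x in Ioo a c, p x)
      · rw [hpt c hac]; exact ENNReal.ofReal_ne_top
      · exact lintegral_mono_set (Ioo_subset_Ioo_left hay.le)
    · exact ENNReal.pow_ne_top hBy
  -- symmetrization
  have hsym : ∀ x, a < x → B x ^ 2 = 2 * ∫⁻ t in Ioo x c, h t * B t := by
    intro x hax
    have e0 : B x ^ 2 = ∫⁻ t in Ioo x c, h t * B x := by
      rw [sq, lintegral_mul_const _ hhmeas]
    have hmono2 : Measurable fun t => ∫⁻ u in Ioo x t, h u :=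
      Monotone.measurable (fun t t' htt' => lintegral_mono_set (Ioo_subset_Ioo_right htt'))
    have split : ∀ t ∈ Ioo x c, B x = (∫⁻ u in Ioo x t, h u) + B t := by
      intro t ht
      have hun : Ioo x c = Ioo x t ∪ Ico t c := (Ioo_union_Ico_eq_Ioo ht.1 ht.2.le).symm
      have hdisj : Disjoint (Ioo x t) (Ico t c) := by
        apply Set.disjoint_left.mpr
        rintro u ⟨_, h2⟩ ⟨h3, _⟩
        exact absurd h2 (not_lt.mpr h3)
      have hIco : ∫⁻ u in Ico t c, h u = B t := by
        rw [hB]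
        congr 1
        exact (Measure.restrict_congr_set Ioo_ae_eq_Ico).symm
      rw [hB]
      simp only
      rw [hun, lintegral_union measurableSet_Ico hdisj, hIco]
    calc B x ^ 2 = ∫⁻ t in Ioo x c, h t * B x := e0
      _ = ∫⁻ t in Ioo x c, (h t * ∫⁻ u in Ioo x t, h u) + h t * B t := by
          apply setLIntegral_congr_fun measurableSet_Ioo
          intro t ht
          beta_reduce
          rw [split t ht, mul_add]
      _ = (∫⁻ t in Ioo x c, h t * ∫⁻ u in Ioo x t, h u) + ∫⁻ t in Ioo x c, h t * B t :=
          lintegral_add_left (hhmeas.mul hmono2) _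
      _ = (∫⁻ t in Ioo x c, (∫⁻ u in Ioo x t, h u) * h t) + ∫⁻ t in Ioo x c, h t * B t := by
          congr 1
          exact lintegral_congr fun t => mul_comm _ _
      _ = (∫⁻ u in Ioo x c, h u * B u) + ∫⁻ t in Ioo x c, h t * B t := by
          congr 1
          exact (swap_lemma h h hhmeas hhmeas).symm
      _ = 2 * ∫⁻ t in Ioo x c, h t * B t := by rw [two_mul]
  -- main bound on truncations
  have hIbound : ∀ y, a < y → y < c → ∫⁻ x in Ioo y c, Φ x ≤ ENNReal.ofReal (1/s^2) * K := by
    intro y hay hyc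
    have hcancel : ENNReal.ofReal (1/s^2) = ENNReal.ofReal (1/s) ^ 2 := by
      rw [← ENNReal.ofReal_pow (by positivity)]
      norm_num
    rw [hcancel]
    apply ennreal_bootstrap (hIfin y hay hyc)
    set q : ℝ → ℝ≥0∞ := fun t => ENNReal.ofReal ((t-a)^(s-1/2)) with hq
    have hqmeas : Measurable q := by fun_prop
    have hIview : ∫⁻ t in Ioo y c, (fun t => q t * B t) t ^ 2 = ∫⁻ x in Ioo y c, Φ x := by
      apply setLIntegral_congr_fun measurableSet_Ioo
      intro t ht
      have hta : (0:ℝ) < t - a := by linarith [ht.1]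
      beta_reduce
      rw [mul_pow, hΦ]
      simp only
      congr 1
      rw [hq, hp]
      simp only
      rw [← ENNReal.ofReal_pow (by positivity)]
      congr 1
      rw [← Real.rpow_natCast ((t-a)^(s-1/2)) 2, ← Real.rpow_mul hta.le]
      congr 1
      push_cast
      ring
    calc ∫⁻ x in Ioo y c, Φ x
        = ∫⁻ x in Ioo y c, 2 * (p x * ∫⁻ t in Ioo x c, h t * B t) := by
          apply setLIntegral_congr_fun measurableSet_Ioo
          intro x hx
          rw [hΦ]
          simp only
          rw [hsym x (hay.trans hx.1), mul_left_comm]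
      _ = 2 * ∫⁻ x in Ioo y c, p x * ∫⁻ t in Ioo x c, h t * B t := by
          apply lintegral_const_mul
          apply hpmeas.mul
          exact Antitone.measurable (fun t t' htt' => lintegral_mono_set (Ioo_subset_Ioo_left htt'))
      _ = 2 * ∫⁻ t in Ioo y c, (∫⁻ x in Ioo y t, p x) * (h t * B t) := by
          rw [swap_lemma p (fun t => h t * B t) hpmeas (hhmeas.mul hBmeas)]
      _ ≤ 2 * ∫⁻ t in Ioo y c, ENNReal.ofReal ((t-a)^(2*s)/(2*s)) * (h t * B t) := by
          apply mul_le_mul_right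
          apply setLIntegral_mono' measurableSet_Ioo
          intro t ht
          apply mul_le_mul_left
          calc ∫⁻ x in Ioo y t, p x ≤ ∫⁻ x in Ioo a t, p x :=
                lintegral_mono_set (Ioo_subset_Ioo_left hay.le)
            _ = ENNReal.ofReal ((t-a)^(2*s)/(2*s)) := hpt t (hay.trans ht.1)
      _ = 2 * ∫⁻ t in Ioo y c, ENNReal.ofReal (1/(2*s)) * (k t * (q t * B t)) := by
          congr 1
          apply setLIntegral_congr_fun measurableSet_Ioo
          intro t ht
          have hta : (0:ℝ) < t - a := by linarith [ht.1]
          have e1 : ENNReal.ofReal ((t-a)^(2*s)/(2*s)) =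
              ENNReal.ofReal (1/(2*s)) * ENNReal.ofReal ((t-a)^(2*s)) := by
            rw [← ENNReal.ofReal_mul (one_div_nonneg.mpr (by linarith))]
            congr 1
            ring
          have e2 : ENNReal.ofReal ((t-a)^(2*s)) * ENNReal.ofReal ((t-a)^(-(s+1/2))) =
              ENNReal.ofReal ((t-a)^(s-1/2)) := by
            rw [← ENNReal.ofReal_mul (by positivity), ← Real.rpow_add hta]
            congr 1
            ring
          rw [hh, hw, hq]
          simp only
          rw [e1, ← e2]
          ring
      _ = (2 * ENNReal.ofReal (1/(2*s))) * ∫⁻ t in Ioo y c, k t * (q t * B t) := by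
          rw [lintegral_const_mul _ (show Measurable (fun t => k t * (q t * B t)) from hk.mul (hqmeas.mul hBmeas)), mul_assoc]
      _ = ENNReal.ofReal (1/s) * ∫⁻ t in Ioo y c, k t * (q t * B t) := by
          congr 1
          rw [show (2:ℝ≥0∞) = ENNReal.ofReal 2 by simp]
          rw [← ENNReal.ofReal_mul (by norm_num)]
          congr 1
          field_simp
      _ ≤ ENNReal.ofReal (1/s) * ((∫⁻ t in Ioo y c, k t ^ 2) ^ ((1:ℝ)/2)
            * (∫⁻ t in Ioo y c, (fun t => q t * B t) t ^ 2) ^ ((1:ℝ)/2)) := by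
          apply mul_le_mul_right
          exact CS_lemma k (fun t => q t * B t) hk.aemeasurable (hqmeas.mul hBmeas).aemeasurable
      _ ≤ ENNReal.ofReal (1/s) * K ^ ((1:ℝ)/2) * (∫⁻ x in Ioo y c, Φ x) ^ ((1:ℝ)/2) := by
          rw [hIview, mul_assoc]
          apply mul_le_mul_right
          apply mul_le_mul_left
          apply ENNReal.rpow_le_rpow _ (by norm_num)
          exact lintegral_mono_set (Ioo_subset_Ioo_left hay.le)
  -- pass to the limit
  set y : ℕ → ℝ := fun n => a + (c-a)/(n+2) with hy
  have hyn : ∀ n, a < y n ∧ y n < c := by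
    intro n
    constructor
    · rw [hy]; simp only
      have : (0:ℝ) < (c-a)/(n+2) := div_pos (by linarith) (by positivity)
      linarith
    · rw [hy]; simp only
      have h2 : (c-a)/((n:ℝ)+2) < (c-a)/1 := by
        apply div_lt_div_of_pos_left (by linarith) (by norm_num)
        · push_cast; linarith [Nat.cast_nonneg (α := ℝ) n]
      simp at h2
      linarith
  have hymono : ∀ n m, n ≤ m → y m ≤ y n := by
    intro n m hnm
    rw [hy]; simp only
    have : (c-a)/((m:ℝ)+2) ≤ (c-a)/((n:ℝ)+2) := by
      apply div_le_div_of_nonneg_left (by linarith) (by positivity)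
      push_cast
      exact_mod_cast by exact_mod_cast add_le_add_left (Nat.cast_le.mpr hnm) 2
    linarith
  set fn : ℕ → ℝ → ℝ≥0∞ := fun n => (Ioo (y n) c).indicator Φ with hfn
  have hfmono : Monotone fn := by
    intro n m hnm
    apply indicator_le_indicator_of_subset (Ioo_subset_Ioo_left (hymono n m hnm)) (fun x => by simp)
  have hsup : ∀ x, (⨆ n, fn n x) = (Ioo a c).indicator Φ x := by
    intro x
    by_cases hx : x ∈ Ioo a c
    · rw [indicator_of_mem hx]
      apply le_antisymm
      · exact iSup_le fun n => indicator_le_self _ _ x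
      · obtain ⟨n, hn⟩ : ∃ n : ℕ, y n < x := by
          obtain ⟨n, hn⟩ := exists_nat_gt ((c-a)/(x-a))
          refine ⟨n, ?_⟩
          rw [hy]; simp only
          have hxa : (0:ℝ) < x - a := by linarith [hx.1]
          have : (c-a)/((n:ℝ)+2) < x - a := by
            rw [div_lt_iff₀ (by positivity)]
            have h1 : (c-a)/(x-a) < (n:ℝ)+2 := by linarith
            calc c - a = ((c-a)/(x-a)) * (x-a) := by field_simp
              _ < ((n:ℝ)+2) * (x-a) := by
                  apply mul_lt_mul_of_pos_right h1 hxa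
              _ = (x-a) * ((n:ℝ)+2) := mul_comm _ _
          linarith
        calc Φ x = fn n x :=
              (indicator_of_mem (show x ∈ Ioo (y n) c from ⟨hn, hx.2⟩) Φ).symm
          _ ≤ ⨆ n, fn n x := le_iSup (fun n => fn n x) n
    · rw [indicator_of_notMem hx]
      apply le_antisymm _ (by simp)
      apply iSup_le
      intro n
      have hzero : fn n x = 0 := by
        rw [hfn]
        simp only
        apply indicator_of_notMem
        intro hmem
        exact hx ⟨(hyn n).1.trans hmem.1, hmem.2⟩
      rw [hzero]
  calc ∫⁻ x in Ioo a c, Φ x = ∫⁻ x, (Ioo a c).indicator Φ x := (lintegral_indicator measurableSet_Ioo Φ).symm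
    _ = ∫⁻ x, ⨆ n, fn n x := by
        apply lintegral_congr
        intro x
        rw [hsup x]
    _ = ⨆ n, ∫⁻ x, fn n x :=
        lintegral_iSup (fun n => hΦmeas.indicator measurableSet_Ioo) hfmono
    _ ≤ ENNReal.ofReal (1/s^2) * K := by
        apply iSup_le
        intro n
        rw [hfn]
        simp only
        rw [lintegral_indicator measurableSet_Ioo]
        exact hIbound (y n) (hyn n).1 (hyn n).2

set_option maxHeartbeats 2000000 in
/-- For `s_a > 0` and `f` locally absolutely continuous on `(a,b)` with
`α_{s_a} f ∈ L²((a,b))`: `f' ∈ L²((a,r₁))`, `|f|²/(x-a)² ∈ L¹((a,r₁))`, and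
`f(x)/(x-a)^{1/2} → 0` as `x → a⁺`, for any `r₁ ∈ (a,b]`. -/
theorem stmt9 (a b s : ℝ) (hab : a < b) (hs : 0 < s)
    (f f' : ℝ → ℂ)
    (hderiv : ∀ x ∈ Ioo a b, HasDerivAt f (f' x) x)
    (hαL2 : IntegrableOn
      (fun x => ‖f' x - (((s + 1/2) / (x - a) : ℝ) : ℂ) * f x‖ ^ 2) (Ioo a b)) :
    ∀ r₁, a < r₁ → r₁ ≤ b →
      IntegrableOn (fun x => ‖f' x‖ ^ 2) (Ioo a r₁) ∧
      IntegrableOn (fun x => ‖f x‖ ^ 2 / (x - a) ^ 2) (Ioo a r₁) ∧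
      Tendsto (fun x => f x / (((x - a) ^ ((1 : ℝ)/2) : ℝ) : ℂ))
        (nhdsWithin a (Ioi a)) (nhds 0) := by
  set g : ℝ → ℂ := fun x => f' x - (((s + 1/2) / (x - a) : ℝ) : ℂ) * f x with hgdef
  have hfinvol : volume (Ioo a b) ≠ ⊤ := by simp
  -- measurability
  have hfcont : ContinuousOn f (Ioo a b) :=
    fun x hx => ((hderiv x hx).continuousAt).continuousWithinAt
  have hfm : AEStronglyMeasurable f (volume.restrict (Ioo a b)) :=
    hfcont.aestronglyMeasurable measurableSet_Ioo
  have hf'm : AEStronglyMeasurable f' (volume.restrict (Ioo a b)) := by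
    have hae : f' =ᶠ[ae (volume.restrict (Ioo a b))] deriv f := by
      rw [Filter.EventuallyEq, ae_restrict_iff' measurableSet_Ioo]
      exact ae_of_all _ fun x hx => ((hderiv x hx).deriv).symm
    exact ((measurable_deriv f).aestronglyMeasurable).congr hae.symm
  have hgm : AEStronglyMeasurable g (volume.restrict (Ioo a b)) := by
    apply hf'm.sub
    apply AEStronglyMeasurable.mul _ hfm
    exact (Complex.measurable_ofReal.comp
      (measurable_const.div (measurable_id.sub_const a))).aestronglyMeasurable
  have hgint : IntegrableOn g (Ioo a b) := by
    apply Integrable.mono' ((integrable_const 1).add hαL2) hgm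
    filter_upwards with x
    simp only [Pi.add_apply]
    show ‖g x‖ ≤ 1 + ‖g x‖^2
    nlinarith [sq_nonneg (‖g x‖ - 1), norm_nonneg (g x)]
  -- derivative of the transformed function
  set FF : ℝ → ℂ := fun x => (((x - a) ^ (-(s+1/2)) : ℝ) : ℂ) * f x with hFF
  have hFder : ∀ x ∈ Ioo a b,
      HasDerivAt FF ((((x - a) ^ (-(s+1/2)) : ℝ) : ℂ) * g x) x := by
    intro x hx
    have hxa : (0:ℝ) < x - a := by linarith [hx.1]
    have hr : HasDerivAt (fun y : ℝ => (y - a) ^ (-(s+1/2)))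
        (-(s+1/2) * (x - a) ^ (-(s+1/2) - 1)) x := by
      have h1 : HasDerivAt (fun y : ℝ => y - a) 1 x := (hasDerivAt_id x).sub_const a
      have h2 := Real.hasDerivAt_rpow_const (x := x - a) (p := -(s+1/2)) (Or.inl hxa.ne')
      have h3 := h2.comp x h1
      simpa [Function.comp_def] using h3
    have hrC : HasDerivAt (fun y : ℝ => ((((y - a) ^ (-(s+1/2)) : ℝ)) : ℂ))
        (((-(s+1/2) * (x - a) ^ (-(s+1/2) - 1) : ℝ)) : ℂ) x := hr.ofReal_comp
    have hmul := hrC.mul (hderiv x hx)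
    have key : (-(s+1/2) * (x - a) ^ (-(s+1/2) - 1) : ℝ)
        = -((x - a) ^ (-(s+1/2)) * ((s + 1/2) / (x - a))) := by
      rw [show -(s+1/2) - 1 = -(s+1/2) + -1 by ring, Real.rpow_add hxa, Real.rpow_neg_one]
      field_simp
    rw [hFF, hgdef]
    simp only
    refine hmul.congr_deriv ?_
    rw [key]
    push_cast
    ring
  -- interval integrability of the weighted g
  have hwgC : ∀ x y, a < x → y < b → IntegrableOn
      (fun t => (((t - a) ^ (-(s+1/2)) : ℝ) : ℂ) * g t) (Icc x y) volume := by
    intro x y hax hyb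
    by_cases hxy : x ≤ y
    · apply IntegrableOn.continuousOn_mul _ (hgint.mono_set ?_) isCompact_Icc
      · apply Continuous.comp_continuousOn Complex.continuous_ofReal
        apply ContinuousOn.rpow_const (by fun_prop)
        intro t ht
        exact Or.inl (ne_of_gt (by linarith [ht.1] : (0:ℝ) < t - a))
      · intro t ht
        exact ⟨by linarith [ht.1], by linarith [ht.2]⟩
    · rw [Icc_eq_empty hxy]
      exact integrableOn_empty
  have hFTC : ∀ x y, x ∈ Ioo a b → y ∈ Ioo a b → x ≤ y →
      FF y - FF x = ∫ t in x..y, (((t - a) ^ (-(s+1/2)) : ℝ) : ℂ) * g t := by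
    intro x y hx hy hxy
    apply (intervalIntegral.integral_eq_sub_of_hasDerivAt _ _).symm
    · intro t ht
      rw [uIcc_of_le hxy] at ht
      exact hFder t ⟨lt_of_lt_of_le hx.1 ht.1, lt_of_le_of_lt ht.2 hy.2⟩
    · rw [intervalIntegrable_iff_integrableOn_Ioc_of_le hxy]
      exact (hwgC x y hx.1 hy.2).mono_set Ioc_subset_Icc_self
  -- midpoint
  set c := (a+b)/2 with hcdef
  have hac : a < c := by rw [hcdef]; linarith
  have hcb : c < b := by rw [hcdef]; linarith
  have hcmem : c ∈ Ioo a b := ⟨hac, hcb⟩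
  have hwgR : ∀ x y, a < x → y < b → IntegrableOn
      (fun t => (t - a) ^ (-(s+1/2)) * ‖g t‖) (Ioc x y) volume := by
    intro x y hax hyb
    by_cases hxy : x ≤ y
    · have hgnint : IntegrableOn (fun t => ‖g t‖) (Ioo a b) volume := hgint.norm
      apply IntegrableOn.mono_set _ (Ioc_subset_Icc_self : Ioc x y ⊆ Icc x y)
      apply IntegrableOn.continuousOn_mul _ (hgnint.mono_set ?_) isCompact_Icc
      · apply ContinuousOn.rpow_const (by fun_prop)
        intro t ht
        exact Or.inl (ne_of_gt (by linarith [ht.1] : (0:ℝ) < t - a))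
      · intro t ht
        exact ⟨by linarith [ht.1], by linarith [ht.2]⟩
    · rw [Ioc_eq_empty (fun h => hxy h.le)]
      exact integrableOn_empty
  set R : ℝ → ℝ := fun x => ∫ t in Ioc x c, (t - a) ^ (-(s+1/2)) * ‖g t‖ with hR
  have hRnn : ∀ x, a < x → 0 ≤ R x := by
    intro x hax
    apply setIntegral_nonneg measurableSet_Ioc
    intro t ht
    exact mul_nonneg (Real.rpow_nonneg (by linarith [ht.1]) _) (norm_nonneg _)
  have hnormbd : ∀ x, a < x → x ≤ c → ‖FF x‖ ≤ ‖FF c‖ + R x := by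
    intro x hax hxc
    have hx : x ∈ Ioo a b := ⟨hax, by linarith⟩
    have h1 := hFTC x c hx hcmem hxc
    have h2 : ‖FF c - FF x‖ ≤ R x := by
      rw [h1]
      calc ‖∫ t in x..c, (((t - a) ^ (-(s+1/2)) : ℝ) : ℂ) * g t‖
          ≤ ∫ t in x..c, ‖(((t - a) ^ (-(s+1/2)) : ℝ) : ℂ) * g t‖ :=
            intervalIntegral.norm_integral_le_integral_norm hxc
        _ = ∫ t in Ioc x c, ‖(((t - a) ^ (-(s+1/2)) : ℝ) : ℂ) * g t‖ :=
            intervalIntegral.integral_of_le hxc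
        _ = R x := by
            apply setIntegral_congr_fun measurableSet_Ioc
            intro t ht
            show ‖(((t - a) ^ (-(s+1/2)) : ℝ) : ℂ) * g t‖ = (t - a) ^ (-(s+1/2)) * ‖g t‖
            rw [norm_mul, Complex.norm_real, Real.norm_eq_abs,
              abs_of_nonneg (Real.rpow_nonneg (by linarith [ht.1] : (0:ℝ) ≤ t - a) _)]
    calc ‖FF x‖ = ‖FF c - (FF c - FF x)‖ := by rw [sub_sub_cancel]
      _ ≤ ‖FF c‖ + ‖FF c - FF x‖ := norm_sub_le _ _
      _ ≤ ‖FF c‖ + R x := by linarith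
  have hfnorm : ∀ x, a < x → ‖f x‖ = (x - a) ^ (s+1/2) * ‖FF x‖ := by
    intro x hax
    have hxa : (0:ℝ) < x - a := by linarith
    rw [hFF]
    simp only
    rw [norm_mul, Complex.norm_real, Real.norm_eq_abs,
      abs_of_nonneg (Real.rpow_nonneg hxa.le _), Real.rpow_neg hxa.le]
    have hne : (x - a) ^ (s+1/2) ≠ 0 := (Real.rpow_pos_of_pos hxa _).ne'
    field_simp
  -- measurable ENNReal version of the norm of g
  have hkae : AEMeasurable (fun t => ENNReal.ofReal ‖g t‖) (volume.restrict (Ioo a b)) :=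
    hgm.norm.aemeasurable.ennreal_ofReal
  set k := hkae.mk _ with hkmk
  have hkmeas : Measurable k := hkae.measurable_mk
  have hkeq : (fun t => ENNReal.ofReal ‖g t‖) =ᶠ[ae (volume.restrict (Ioo a b))] k :=
    hkae.ae_eq_mk
  have hKfin : ∫⁻ t in Ioo a b, k t ^ 2 < ⊤ := by
    have h1 : ∫⁻ t in Ioo a b, k t ^ 2 = ∫⁻ t in Ioo a b, ENNReal.ofReal (‖g t‖^2) := by
      apply lintegral_congr_ae
      filter_upwards [hkeq] with t ht
      rw [← ht, ← ENNReal.ofReal_pow (norm_nonneg _)]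
    rw [h1]
    exact Integrable.lintegral_lt_top hαL2
  have hRof : ∀ x, a < x → x < c → ENNReal.ofReal (R x)
      = ∫⁻ t in Ioo x c, ENNReal.ofReal ((t - a) ^ (-(s+1/2))) * k t := by
    intro x hax hxc
    have hnn : 0 ≤ᶠ[ae (volume.restrict (Ioc x c))]
        (fun t => (t - a) ^ (-(s+1/2)) * ‖g t‖) := by
      filter_upwards [ae_restrict_mem measurableSet_Ioc] with t ht
      exact mul_nonneg (Real.rpow_nonneg (by linarith [ht.1]) _) (norm_nonneg _)
    rw [hR]
    simp only
    rw [ofReal_integral_eq_lintegral_ofReal (hwgR x c hax hcb) hnn]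
    rw [show volume.restrict (Ioc x c) = volume.restrict (Ioo x c) from
      (Measure.restrict_congr_set Ioo_ae_eq_Ioc).symm]
    apply lintegral_congr_ae
    have hsub : Ioo x c ⊆ Ioo a b := fun t ht => ⟨hax.trans ht.1, ht.2.trans hcb⟩
    filter_upwards [ae_restrict_of_ae_restrict_of_subset hsub hkeq,
      ae_restrict_mem measurableSet_Ioo] with t htk htm
    rw [ENNReal.ofReal_mul (Real.rpow_nonneg (by linarith [htm.1]) _), htk]
  -- bound on the right part [c, b)
  have hgnint2 : IntegrableOn (fun t => ‖g t‖) (Ioo a b) volume := hgint.norm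
  have hsubcb : Ioo c b ⊆ Ioo a b := fun t ht => ⟨hac.trans ht.1, ht.2⟩
  have hwgIoo : IntegrableOn (fun t => (t - a) ^ (-(s+1/2)) * ‖g t‖) (Ioo c b) volume := by
    apply Integrable.mono' ((hgnint2.mono_set hsubcb).const_mul ((c - a) ^ (-(s+1/2))))
    · apply AEStronglyMeasurable.mul
      · exact ((by fun_prop : Measurable fun t : ℝ => (t - a) ^ (-(s+1/2)))).aestronglyMeasurable
      · exact (hgm.norm).mono_measure (Measure.restrict_mono hsubcb le_rfl)
    · filter_upwards [ae_restrict_mem measurableSet_Ioo] with t ht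
      rw [Real.norm_eq_abs, abs_of_nonneg (mul_nonneg
        (Real.rpow_nonneg (by linarith [ht.1]) _) (norm_nonneg _))]
      apply mul_le_mul_of_nonneg_right _ (norm_nonneg _)
      exact Real.rpow_le_rpow_of_nonpos (by linarith : (0:ℝ) < c - a)
        (by linarith [ht.1] : c - a ≤ t - a) (by linarith : -(s+1/2) ≤ 0)
  set D : ℝ := ∫ t in Ioo c b, (t - a) ^ (-(s+1/2)) * ‖g t‖ with hD
  set Mb : ℝ := (b - a) ^ (s+1/2) * (‖FF c‖ + D) with hMb
  have hDnn : 0 ≤ D := by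
    apply setIntegral_nonneg measurableSet_Ioo
    intro t ht
    exact mul_nonneg (Real.rpow_nonneg (by linarith [ht.1]) _) (norm_nonneg _)
  have hright : ∀ x ∈ Ico c b, ‖f x‖ ≤ Mb := by
    intro x hx
    have hxmem : x ∈ Ioo a b := ⟨by linarith [hx.1], hx.2⟩
    have h1 := hFTC c x hcmem hxmem hx.1
    have h2 : ‖FF x - FF c‖ ≤ D := by
      rw [h1]
      calc ‖∫ t in c..x, (((t - a) ^ (-(s+1/2)) : ℝ) : ℂ) * g t‖
          ≤ ∫ t in c..x, ‖(((t - a) ^ (-(s+1/2)) : ℝ) : ℂ) * g t‖ :=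
            intervalIntegral.norm_integral_le_integral_norm hx.1
        _ = ∫ t in Ioc c x, ‖(((t - a) ^ (-(s+1/2)) : ℝ) : ℂ) * g t‖ :=
            intervalIntegral.integral_of_le hx.1
        _ = ∫ t in Ioc c x, (t - a) ^ (-(s+1/2)) * ‖g t‖ := by
            apply setIntegral_congr_fun measurableSet_Ioc
            intro t ht
            show ‖(((t - a) ^ (-(s+1/2)) : ℝ) : ℂ) * g t‖ = (t - a) ^ (-(s+1/2)) * ‖g t‖
            rw [norm_mul, Complex.norm_real, Real.norm_eq_abs,
              abs_of_nonneg (Real.rpow_nonneg (by linarith [ht.1] : (0:ℝ) ≤ t - a) _)]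
        _ ≤ D := by
            apply setIntegral_mono_set hwgIoo
            · filter_upwards [ae_restrict_mem measurableSet_Ioo] with t ht
              exact mul_nonneg (Real.rpow_nonneg (by linarith [ht.1]) _) (norm_nonneg _)
            · apply HasSubset.Subset.eventuallyLE
              intro t ht
              exact ⟨ht.1, lt_of_le_of_lt ht.2 hx.2⟩
    have h3 : ‖FF x‖ ≤ ‖FF c‖ + D := by
      calc ‖FF x‖ = ‖FF c + (FF x - FF c)‖ := by rw [add_sub_cancel]
        _ ≤ ‖FF c‖ + ‖FF x - FF c‖ := norm_add_le _ _
        _ ≤ ‖FF c‖ + D := by linarith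
    calc ‖f x‖ = (x - a) ^ (s+1/2) * ‖FF x‖ := hfnorm x (by linarith [hx.1])
      _ ≤ (b - a) ^ (s+1/2) * (‖FF c‖ + D) := by
          apply mul_le_mul _ h3 (norm_nonneg _) (Real.rpow_nonneg (by linarith) _)
          exact Real.rpow_le_rpow (by linarith [hx.1]) (by linarith [hx.2]) (by linarith)
      _ = Mb := rfl
  -- Master 1 : integrability of |f|^2/(x-a)^2 on (a,b)
  have hφnn : ∀ x : ℝ, 0 ≤ ‖f x‖^2/(x - a)^2 := fun x => div_nonneg (by positivity) (by positivity)
  have hφm : AEStronglyMeasurable (fun x => ‖f x‖^2/(x - a)^2) (volume.restrict (Ioo a b)) := by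
    apply AEMeasurable.aestronglyMeasurable
    apply AEMeasurable.div
    · exact hfm.norm.aemeasurable.pow_const 2
    · exact (((measurable_id.sub_const a).pow_const 2)).aemeasurable
  have hsubac : Ioo a c ⊆ Ioo a b := fun t ht => ⟨ht.1, ht.2.trans hcb⟩
  have master1 : IntegrableOn (fun x => ‖f x‖^2/(x - a)^2) (Ioo a b) volume := by
    rw [show Ioo a b = Ioo a c ∪ Ico c b from (Ioo_union_Ico_eq_Ioo hac hcb.le).symm]
    apply IntegrableOn.union
    · -- left part via Hardy
      constructor
      · exact hφm.mono_measure (Measure.restrict_mono hsubac le_rfl)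
      · rw [hasFiniteIntegral_iff_ofReal (ae_of_all _ hφnn)]
        set P : ℝ → ℝ≥0∞ := fun x => ENNReal.ofReal ((x - a)^(2*s-1)) with hPdef
        have hPmeas : Measurable P := by fun_prop
        set Bt : ℝ → ℝ≥0∞ :=
          fun x => ∫⁻ t in Ioo x c, ENNReal.ofReal ((t - a)^(-(s+1/2))) * k t with hBtdef
        have hBtmeas : Measurable Bt :=
          Antitone.measurable (fun x y hxy => lintegral_mono_set (Ioo_subset_Ioo_left hxy))
        have hPval : ∫⁻ x in Ioo a c, P x = ENNReal.ofReal ((c - a)^(2*s)/(2*s)) := by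
          rw [hPdef]
          rw [lint_rpow (by intro hc'; linarith : 2*s-1 ≠ -1) le_rfl hac (Or.inr (by linarith))]
          rw [show 2*s-1+1 = 2*s by ring, sub_self, Real.zero_rpow (by positivity), sub_zero]
        have hkey : ∀ x ∈ Ioo a c, ENNReal.ofReal (‖f x‖^2/(x - a)^2)
            ≤ ENNReal.ofReal (2*‖FF c‖^2) * P x + 2 * (P x * Bt x ^ 2) := by
          intro x hx
          have hxa : (0:ℝ) < x - a := by linarith [hx.1]
          have hid : ‖f x‖^2/(x - a)^2 = (x - a)^(2*s-1) * ‖FF x‖^2 := by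
            have e1 : ((x - a):ℝ)^(2:ℕ) = (x - a)^((2:ℝ)) := (Real.rpow_natCast _ 2).symm
            have e2 : ((x - a)^(s+1/2))^(2:ℕ) = (x - a)^(2*s+1) := by
              rw [← Real.rpow_natCast ((x-a)^(s+1/2)) 2, ← Real.rpow_mul hxa.le]
              congr 1
              push_cast
              ring
            calc ‖f x‖^2/(x - a)^2 = ((x - a)^(2*s+1) * ‖FF x‖^2)/(x - a)^((2:ℝ)) := by
                  rw [hfnorm x hx.1, mul_pow, e2, ← e1]
              _ = (x - a)^(2*s+1)/(x - a)^((2:ℝ)) * ‖FF x‖^2 := by ring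
              _ = (x - a)^(2*s-1) * ‖FF x‖^2 := by
                  rw [← Real.rpow_sub hxa, show 2*s+1-(2:ℝ) = 2*s-1 by ring]
          have hFFb := hnormbd x hx.1 hx.2.le
          have hreal : ‖f x‖^2/(x - a)^2
              ≤ 2*‖FF c‖^2*(x - a)^(2*s-1) + 2*((x - a)^(2*s-1) * R x^2) := by
            rw [hid]
            have hq : ‖FF x‖^2 ≤ 2*‖FF c‖^2 + 2*R x^2 := by
              nlinarith [hFFb, hRnn x hx.1, norm_nonneg (FF x), norm_nonneg (FF c),
                sq_nonneg (‖FF c‖ - R x)]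
            have hPnn : (0:ℝ) ≤ (x - a)^(2*s-1) := Real.rpow_nonneg hxa.le _
            nlinarith [hq, hPnn, sq_nonneg (‖FF x‖)]
          calc ENNReal.ofReal (‖f x‖^2/(x - a)^2)
              ≤ ENNReal.ofReal (2*‖FF c‖^2*(x - a)^(2*s-1) + 2*((x - a)^(2*s-1) * R x^2)) :=
                ENNReal.ofReal_le_ofReal hreal
            _ ≤ ENNReal.ofReal (2*‖FF c‖^2*(x - a)^(2*s-1))
                + ENNReal.ofReal (2*((x - a)^(2*s-1) * R x^2)) := ENNReal.ofReal_add_le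
            _ = ENNReal.ofReal (2*‖FF c‖^2) * P x + 2 * (P x * Bt x ^ 2) := by
                congr 1
                · rw [ENNReal.ofReal_mul (by positivity)]
                · rw [ENNReal.ofReal_mul (by norm_num), ENNReal.ofReal_mul
                    (Real.rpow_nonneg hxa.le _), ENNReal.ofReal_ofNat,
                    ENNReal.ofReal_pow (hRnn x hx.1), hRof x hx.1 hx.2]
        calc ∫⁻ x in Ioo a c, ENNReal.ofReal (‖f x‖^2/(x - a)^2)
            ≤ ∫⁻ x in Ioo a c, (ENNReal.ofReal (2*‖FF c‖^2) * P x + 2 * (P x * Bt x ^ 2)) :=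
              setLIntegral_mono' measurableSet_Ioo hkey
          _ = ENNReal.ofReal (2*‖FF c‖^2) * (∫⁻ x in Ioo a c, P x)
              + 2 * ∫⁻ x in Ioo a c, P x * Bt x ^ 2 := by
              rw [lintegral_add_left (hPmeas.const_mul _), lintegral_const_mul _ hPmeas,
                lintegral_const_mul _ (show Measurable (fun x => P x * Bt x ^ 2) from hPmeas.mul (hBtmeas.pow_const 2))]
          _ < ⊤ := by
              apply ENNReal.add_lt_top.mpr
              constructor
              · apply ENNReal.mul_lt_top ENNReal.ofReal_lt_top
                rw [hPval]
                exact ENNReal.ofReal_lt_top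
              · apply ENNReal.mul_lt_top (by norm_num)
                apply lt_of_le_of_lt (hardy hs hac k hkmeas)
                apply ENNReal.mul_lt_top ENNReal.ofReal_lt_top
                exact lt_of_le_of_lt (lintegral_mono_set hsubac) hKfin
    · -- right part, bounded
      have hvol : volume (Ico c b) < ⊤ := by
        rw [Real.volume_Ico]; exact ENNReal.ofReal_lt_top
      have hMnn : 0 ≤ Mb := mul_nonneg (Real.rpow_nonneg (by linarith) _)
        (by linarith [hDnn, norm_nonneg (FF c)])
      have hconst : IntegrableOn (fun _ : ℝ => Mb^2/(c - a)^2) (Ico c b) volume :=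
        integrableOn_const hvol.ne
      apply Integrable.mono' hconst
      · exact hφm.mono_measure (Measure.restrict_mono
          (show Ico c b ⊆ Ioo a b from fun t ht => ⟨lt_of_lt_of_le hac ht.1, ht.2⟩) le_rfl)
      · filter_upwards [ae_restrict_mem measurableSet_Ico] with x hx
        rw [Real.norm_eq_abs, abs_of_nonneg (hφnn x)]
        apply div_le_div₀ (by positivity)
          (pow_le_pow_left₀ (norm_nonneg _) (hright x hx) 2)
          (by nlinarith [hac] : (0:ℝ) < (c - a)^2)
          (by nlinarith [hx.1, hac] : (c - a)^2 ≤ (x - a)^2)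
  -- Master 2 : integrability of |f'|^2
  have master2 : IntegrableOn (fun x => ‖f' x‖^2) (Ioo a b) volume := by
    have hb1 : IntegrableOn (fun x => 2 * ‖g x‖^2) (Ioo a b) volume := hαL2.const_mul 2
    have hb2 : IntegrableOn (fun x => 2*(s+1/2)^2 * (‖f x‖^2/(x - a)^2)) (Ioo a b) volume :=
      master1.const_mul (2*(s+1/2)^2)
    have hbound : IntegrableOn
        (fun x => 2*‖g x‖^2 + 2*(s+1/2)^2 * (‖f x‖^2/(x - a)^2)) (Ioo a b) volume :=
      hb1.add hb2
    apply Integrable.mono' hbound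
    · exact (hf'm.norm.aemeasurable.pow_const 2).aestronglyMeasurable
    · filter_upwards [ae_restrict_mem measurableSet_Ioo] with x hx
      have hxa : (0:ℝ) < x - a := by linarith [hx.1]
      rw [Real.norm_eq_abs, abs_of_nonneg (by positivity)]
      have h1 : ‖f' x‖ ≤ ‖g x‖ + (s+1/2)/(x - a) * ‖f x‖ := by
        calc ‖f' x‖ = ‖g x + (((s + 1/2)/(x - a) : ℝ) : ℂ) * f x‖ := by
              rw [hgdef]
              simp only
              rw [sub_add_cancel]
          _ ≤ ‖g x‖ + ‖(((s + 1/2)/(x - a) : ℝ) : ℂ) * f x‖ := norm_add_le _ _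
          _ = ‖g x‖ + (s+1/2)/(x - a) * ‖f x‖ := by
              rw [norm_mul, Complex.norm_real, Real.norm_eq_abs,
                abs_of_nonneg (by positivity)]
      have h2 : ((s+1/2)/(x - a) * ‖f x‖)^2 = (s+1/2)^2 * (‖f x‖^2/(x - a)^2) := by
        field_simp
      have hz : (0:ℝ) ≤ (s+1/2)/(x - a) * ‖f x‖ := by positivity
      nlinarith [h1, h2, hz, sq_nonneg (‖g x‖ - (s+1/2)/(x - a) * ‖f x‖),
        norm_nonneg (g x), norm_nonneg (f' x)]
  -- generalized ofReal identity for tail integrals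
  have hRofG : ∀ x d, a < x → x < d → d ≤ c →
      ENNReal.ofReal (∫ t in Ioc x d, (t - a)^(-(s+1/2)) * ‖g t‖)
        = ∫⁻ t in Ioo x d, ENNReal.ofReal ((t - a)^(-(s+1/2))) * k t := by
    intro x d hax hxd hdc
    have hnn : 0 ≤ᶠ[ae (volume.restrict (Ioc x d))]
        (fun t => (t - a)^(-(s+1/2)) * ‖g t‖) := by
      filter_upwards [ae_restrict_mem measurableSet_Ioc] with t ht
      exact mul_nonneg (Real.rpow_nonneg (by linarith [ht.1]) _) (norm_nonneg _)
    rw [ofReal_integral_eq_lintegral_ofReal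
      ((hwgR x d hax (by linarith)).mono_set (fun t ht => ht)) hnn]
    rw [show volume.restrict (Ioc x d) = volume.restrict (Ioo x d) from
      (Measure.restrict_congr_set Ioo_ae_eq_Ioc).symm]
    apply lintegral_congr_ae
    have hsub : Ioo x d ⊆ Ioo a b := fun t ht => ⟨hax.trans ht.1, by linarith [ht.2, hcb]⟩
    filter_upwards [ae_restrict_of_ae_restrict_of_subset hsub hkeq,
      ae_restrict_mem measurableSet_Ioo] with t htk htm
    rw [ENNReal.ofReal_mul (Real.rpow_nonneg (by linarith [htm.1]) _), htk]
  -- Master 3 : the boundary limit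
  have master3 : Tendsto (fun x => f x / (((x - a) ^ ((1 : ℝ)/2) : ℝ) : ℂ))
      (nhdsWithin a (Ioi a)) (nhds 0) := by
    rw [NormedAddCommGroup.tendsto_nhds_zero]
    intro ε hε
    have hnorm : ∀ x, a < x →
        ‖f x / (((x - a) ^ ((1 : ℝ)/2) : ℝ) : ℂ)‖ = (x - a)^s * ‖FF x‖ := by
      intro x hax
      have hxa : (0:ℝ) < x - a := by linarith
      rw [norm_div, Complex.norm_real, Real.norm_eq_abs,
        abs_of_nonneg (Real.rpow_nonneg hxa.le _), hfnorm x hax, mul_div_right_comm,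
        ← Real.rpow_sub hxa, show s + 1/2 - (1:ℝ)/2 = s by ring]
    set Cs : ℝ := (1/(2*s))^((1:ℝ)/2) with hCs
    have hCsnn : 0 ≤ Cs := Real.rpow_nonneg (by positivity) _
    set v : ℝ := ε/(2*(Cs+1)) with hv
    have hvpos : 0 < v := div_pos hε (by linarith)
    set E : ℝ≥0∞ := ENNReal.ofReal (v^2) with hE
    have hEpos : 0 < E := ENNReal.ofReal_pos.mpr (by positivity)
    -- choose δ with small tail
    obtain ⟨δ, hδa, hδc, hKδ⟩ : ∃ δ, a < δ ∧ δ < c ∧ (∫⁻ t in Ioo a δ, k t^2) < E := by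
      set yδ : ℕ → ℝ := fun n => a + (c - a)/(n+2) with hyδ
      have hyδmem : ∀ n, a < yδ n ∧ yδ n < c := by
        intro n
        constructor
        · rw [hyδ]
          simp only
          have : (0:ℝ) < (c - a)/(n+2) := div_pos (by linarith) (by positivity)
          linarith
        · rw [hyδ]
          simp only
          have h2 : (c - a)/((n:ℝ)+2) < (c - a)/1 := by
            apply div_lt_div_of_pos_left (by linarith) (by norm_num)
            push_cast
            linarith [Nat.cast_nonneg (α := ℝ) n]
          simp at h2
          linarith
      set μ' := volume.withDensity (fun t => (Ioo a b).indicator (fun t => k t^2) t) with hμ'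
      have hμ'app : ∀ u', u' ≤ b → μ' (Ioo a u') = ∫⁻ t in Ioo a u', k t^2 := by
        intro u' hu'
        rw [hμ', withDensity_apply _ measurableSet_Ioo]
        apply setLIntegral_congr_fun measurableSet_Ioo
        intro t ht
        exact indicator_of_mem (show t ∈ Ioo a b from ⟨ht.1, lt_of_lt_of_le ht.2 hu'⟩) _
      have hanti : Antitone (fun n : ℕ => Ioo a (yδ n)) := by
        intro n m hnm
        apply Ioo_subset_Ioo_right
        rw [hyδ]
        simp only
        have : (c - a)/((m:ℝ)+2) ≤ (c - a)/((n:ℝ)+2) := by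
          apply div_le_div_of_nonneg_left (by linarith) (by positivity)
          exact_mod_cast add_le_add_left (Nat.cast_le.mpr hnm) 2
        linarith
      have hfin : μ' (Ioo a (yδ 0)) ≠ ⊤ := by
        rw [hμ'app _ (by linarith [(hyδmem 0).2])]
        exact ((lintegral_mono_set
          (Ioo_subset_Ioo_right (by linarith [(hyδmem 0).2]))).trans_lt hKfin).ne
      have hInter : ⋂ n, Ioo a (yδ n) = ∅ := by
        ext z
        simp only [mem_iInter, mem_Ioo, mem_empty_iff_false, iff_false, not_forall]
        by_contra hz
        push_neg at hz
        have hza : a < z := (hz 0).1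
        obtain ⟨n, hn⟩ := exists_nat_gt ((c - a)/(z - a))
        have h1 : (c - a)/((n:ℝ)+2) < z - a := by
          rw [div_lt_iff₀ (by positivity)]
          calc c - a = ((c - a)/(z - a)) * (z - a) := by
                rw [div_mul_cancel₀ _ (by linarith : z - a ≠ 0)]
            _ < ((n:ℝ)+2) * (z - a) := mul_lt_mul_of_pos_right (by linarith) (by linarith)
            _ = (z - a) * ((n:ℝ)+2) := mul_comm _ _
        have h2 := (hz n).2
        rw [hyδ] at h2
        simp only at h2
        linarith
      have hlim := tendsto_measure_iInter_atTop (μ := μ')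
        (fun n => measurableSet_Ioo.nullMeasurableSet) hanti ⟨0, hfin⟩
      rw [hInter, measure_empty] at hlim
      obtain ⟨n, hn⟩ := (hlim.eventually_lt_const hEpos).exists
      simp only [Function.comp] at hn
      refine ⟨yδ n, (hyδmem n).1, (hyδmem n).2, ?_⟩
      rw [hμ'app _ (by linarith [(hyδmem n).2])] at hn
      exact hn
    set R2 : ℝ := ∫ t in Ioc δ c, (t - a)^(-(s+1/2)) * ‖g t‖ with hR2
    have hR2nn : 0 ≤ R2 := setIntegral_nonneg measurableSet_Ioc
      (fun t ht => mul_nonneg (Real.rpow_nonneg (by linarith [ht.1]) _) (norm_nonneg _))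
    have htends : Tendsto (fun x => (x - a)^s) (nhdsWithin a (Ioi a)) (nhds 0) := by
      have h0 : Tendsto (fun x : ℝ => x - a) (nhdsWithin a (Ioi a)) (nhds 0) := by
        have h0' : Tendsto (fun x : ℝ => x - a) (nhds a) (nhds (a - a)) :=
          (continuous_id.sub continuous_const).tendsto a
        rw [sub_self] at h0'
        exact h0'.mono_left nhdsWithin_le_nhds
      have h1 : ContinuousAt (fun u : ℝ => u^s) 0 :=
        Real.continuousAt_rpow_const 0 s (Or.inr hs.le)
      have h2 := h1.tendsto.comp h0
      rw [Real.zero_rpow hs.ne'] at h2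
      exact h2
    have hev1 : ∀ᶠ x in nhdsWithin a (Ioi a), (x - a)^s < (ε/2)/(‖FF c‖ + R2 + 1) :=
      htends.eventually_lt_const (div_pos (by linarith)
        (by linarith [norm_nonneg (FF c), hR2nn]))
    have hev2 : Ioo a δ ∈ nhdsWithin a (Ioi a) := Ioo_mem_nhdsGT_of_mem ⟨le_refl a, hδa⟩
    filter_upwards [hev1, hev2] with x hx1 hx2
    have hax : a < x := hx2.1
    have hxδ : x < δ := hx2.2
    have hxc : x < c := hxδ.trans hδc
    have hxa : (0:ℝ) < x - a := by linarith
    rw [hnorm x hax]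
    set R1 : ℝ := ∫ t in Ioc x δ, (t - a)^(-(s+1/2)) * ‖g t‖ with hR1
    have hsplit : R x = R1 + R2 := by
      rw [hR, hR1, hR2]
      simp only
      rw [show Ioc x c = Ioc x δ ∪ Ioc δ c from (Ioc_union_Ioc_eq_Ioc hxδ.le hδc.le).symm]
      rw [setIntegral_union (Ioc_disjoint_Ioc_of_le le_rfl) measurableSet_Ioc
        (hwgR x δ hax (by linarith)) (hwgR δ c hδa (by linarith))]
    have hkeyR1 : (x - a)^s * R1 ≤ ε/2 := by
      have hwsq : ∫⁻ t in Ioo x δ, (ENNReal.ofReal ((t - a)^(-(s+1/2))))^2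
          ≤ ENNReal.ofReal ((x - a)^(-(2*s))/(2*s)) := by
        have heq : ∫⁻ t in Ioo x δ, (ENNReal.ofReal ((t - a)^(-(s+1/2))))^2
            = ∫⁻ t in Ioo x δ, ENNReal.ofReal ((t - a)^(-(2*s+1))) := by
          apply setLIntegral_congr_fun measurableSet_Ioo
          intro t ht
          beta_reduce
          rw [← ENNReal.ofReal_pow (Real.rpow_nonneg (by linarith [ht.1]) _)]
          congr 1
          rw [← Real.rpow_natCast ((t - a)^(-(s+1/2))) 2,
            ← Real.rpow_mul (by linarith [ht.1] : (0:ℝ) ≤ t - a)]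
          congr 1
          push_cast
          ring
        rw [heq, lint_rpow (p := -(2*s+1)) (by intro hcon; linarith) hax.le hxδ (Or.inl hax)]
        apply ENNReal.ofReal_le_ofReal
        rw [show -(2*s+1)+1 = -(2*s) by ring]
        rw [show ((δ - a)^(-(2*s)) - (x - a)^(-(2*s)))/(-(2*s))
          = ((x - a)^(-(2*s)) - (δ - a)^(-(2*s)))/(2*s) by ring]
        have h1 : (0:ℝ) ≤ (δ - a)^(-(2*s)) := Real.rpow_nonneg (by linarith) _
        gcongr
        linarith
      have hR1of : ENNReal.ofReal R1
          = ∫⁻ t in Ioo x δ, ENNReal.ofReal ((t - a)^(-(s+1/2))) * k t :=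
        hRofG x δ hax hxδ hδc.le
      have hCS := CS_lemma (μ := volume.restrict (Ioo x δ))
        (fun t => ENNReal.ofReal ((t - a)^(-(s+1/2)))) k (by fun_prop) hkmeas.aemeasurable
      have hEhalf : E ^ ((1:ℝ)/2) = ENNReal.ofReal v := by
        rw [hE, ENNReal.ofReal_rpow_of_nonneg (by positivity) (by norm_num)]
        congr 1
        rw [← Real.rpow_natCast v 2, ← Real.rpow_mul hvpos.le]
        norm_num
      have hwhalf : (ENNReal.ofReal ((x - a)^(-(2*s))/(2*s))) ^ ((1:ℝ)/2)
          = ENNReal.ofReal ((x - a)^(-s) * Cs) := by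
        rw [ENNReal.ofReal_rpow_of_nonneg (by positivity) (by norm_num)]
        congr 1
        rw [div_eq_mul_inv]
        rw [Real.mul_rpow (Real.rpow_nonneg hxa.le _) (by positivity)]
        congr 1
        · rw [← Real.rpow_mul hxa.le]
          congr 1
          ring
        · rw [hCs]
          norm_num
      have hchain : ENNReal.ofReal ((x - a)^s * R1) ≤ ENNReal.ofReal (Cs * v) := by
        rw [ENNReal.ofReal_mul (Real.rpow_nonneg hxa.le _), hR1of]
        calc ENNReal.ofReal ((x - a)^s)
              * ∫⁻ t in Ioo x δ, ENNReal.ofReal ((t - a)^(-(s+1/2))) * k t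
            ≤ ENNReal.ofReal ((x - a)^s)
              * ((∫⁻ t in Ioo x δ, (ENNReal.ofReal ((t - a)^(-(s+1/2))))^2)^((1:ℝ)/2)
                * (∫⁻ t in Ioo x δ, k t^2)^((1:ℝ)/2)) := mul_le_mul_right hCS _
          _ ≤ ENNReal.ofReal ((x - a)^s)
              * (ENNReal.ofReal ((x - a)^(-s) * Cs) * E^((1:ℝ)/2)) := by
              apply mul_le_mul_right
              apply mul_le_mul'
              · rw [← hwhalf]
                exact ENNReal.rpow_le_rpow hwsq (by norm_num)
              · apply ENNReal.rpow_le_rpow _ (by norm_num)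
                exact (lintegral_mono_set (Ioo_subset_Ioo_left hax.le)).trans hKδ.le
          _ = ENNReal.ofReal ((x - a)^s * ((x - a)^(-s) * Cs)) * E^((1:ℝ)/2) := by
              rw [← mul_assoc, ← ENNReal.ofReal_mul (Real.rpow_nonneg hxa.le _)]
          _ = ENNReal.ofReal Cs * E^((1:ℝ)/2) := by
              congr 2
              rw [← mul_assoc, ← Real.rpow_add hxa, show s + -s = (0:ℝ) by ring,
                Real.rpow_zero, one_mul]
          _ = ENNReal.ofReal Cs * ENNReal.ofReal v := by rw [hEhalf]
          _ = ENNReal.ofReal (Cs * v) := (ENNReal.ofReal_mul hCsnn).symm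
      have hfinal : (x - a)^s * R1 ≤ Cs * v :=
        (ENNReal.ofReal_le_ofReal_iff (mul_nonneg hCsnn hvpos.le)).mp hchain
      have hCv : Cs * v ≤ ε/2 := by
        have h1 : Cs * v ≤ (Cs+1) * v :=
          mul_le_mul_of_nonneg_right (by linarith) hvpos.le
        have h2 : (Cs+1) * v = ε/2 := by
          rw [hv]
          field_simp
        linarith
      linarith
    have hFFb := hnormbd x hax hxc.le
    have hpart1 : (x - a)^s * (‖FF c‖ + R2) < ε/2 := by
      have hpos : (0:ℝ) < ‖FF c‖ + R2 + 1 := by linarith [norm_nonneg (FF c)]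
      have h1 := mul_lt_mul_of_pos_right hx1 hpos
      rw [div_mul_cancel₀ _ hpos.ne'] at h1
      have h2 : (x - a)^s * (‖FF c‖ + R2) ≤ (x - a)^s * (‖FF c‖ + R2 + 1) :=
        mul_le_mul_of_nonneg_left (by linarith) (Real.rpow_nonneg hxa.le _)
      linarith
    calc (x - a)^s * ‖FF x‖ ≤ (x - a)^s * (‖FF c‖ + R x) :=
        mul_le_mul_of_nonneg_left hFFb (Real.rpow_nonneg hxa.le _)
      _ = (x - a)^s * (‖FF c‖ + R2) + (x - a)^s * R1 := by rw [hsplit]; ring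
      _ < ε/2 + ε/2 := add_lt_add_of_lt_of_le hpart1 hkeyR1
      _ = ε := by ring
  intro r₁ har1 hr1b
  exact ⟨master2.mono_set (Ioo_subset_Ioo_right hr1b),
    master1.mono_set (Ioo_subset_Ioo_right hr1b), master3⟩
end

section
/- Let Re(s) > 0. Then there exists a constant d ∈ (0,∞) such that for every nonnegative measurable h on (a,a+1), ∫_a^{a+1} (x-a)^{2Re(s)-1} ( ∫_x^{a+1} (t-a)^{-Re(s)-1/2} h(t) dt )² dx ≤ d ∫_a^{a+1} h(x)² dx. -/
open MeasureTheory Set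

/-!
Write `σ = Re s`. Splitting `(t-a)^(-σ-1/2) = (t-a)^(-(1+σ)/2) (t-a)^(-σ/2)` and applying
Cauchy–Schwarz to the inner integral, the first factor contributes
`∫_x^b (t-a)^(-1-σ) dt ≤ (x-a)^(-σ)/σ`, which turns the outer weight `(x-a)^(2σ-1)` into
`(x-a)^(σ-1)/σ`. After exchanging the order of integration (Tonelli on `a < x < t < b`) this
integrates to `(t-a)^σ/σ²`, which exactly cancels the remaining weight `(t-a)^(-σ)`.
Hence one can take `d = 1/σ²`.
-/

theorem ENNReal.sq_lintegral_mul_le {α : Type*} [MeasurableSpace α] {μ : Measure α}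
    {f g : α → ENNReal} (hf : AEMeasurable f μ) (hg : AEMeasurable g μ) :
    (∫⁻ x, f x * g x ∂μ) ^ 2 ≤ (∫⁻ x, f x ^ 2 ∂μ) * ∫⁻ x, g x ^ 2 ∂μ := by
  have h := ENNReal.lintegral_mul_le_Lp_mul_Lq μ .two_two hf hg
  simp only [Pi.mul_apply, ENNReal.rpow_two] at h
  calc (∫⁻ x, f x * g x ∂μ) ^ 2
      ≤ ((∫⁻ x, f x ^ 2 ∂μ) ^ (1 / 2 : ℝ) * (∫⁻ x, g x ^ 2 ∂μ) ^ (1 / 2 : ℝ)) ^ 2 := by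
        gcongr
    _ = (∫⁻ x, f x ^ 2 ∂μ) * ∫⁻ x, g x ^ 2 ∂μ := by
        rw [mul_pow, ← ENNReal.rpow_natCast, ← ENNReal.rpow_natCast, ← ENNReal.rpow_mul,
          ← ENNReal.rpow_mul]
        norm_num

theorem lintegral_Ioo_mul_lintegral_Ioo_comm {w F : ℝ → ENNReal} (hw : Measurable w)
    (hF : Measurable F) (a b : ℝ) :
    ∫⁻ x in Ioo a b, w x * ∫⁻ t in Ioo x b, F t =
      ∫⁻ t in Ioo a b, F t * ∫⁻ x in Ioo a t, w x := by
  have inner_t : ∀ x ∈ Ioo a b,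
      ∫⁻ t in Ioo x b, F t = ∫⁻ t in Ioo a b, (Ioi x).indicator F t := by
    intro x hx
    rw [lintegral_indicator measurableSet_Ioi, Measure.restrict_restrict measurableSet_Ioi]
    congr 2
    exact Set.ext fun t => ⟨fun h => ⟨h.1, hx.1.trans h.1, h.2⟩, fun h => ⟨h.1, h.2.2⟩⟩
  have inner_x : ∀ t ∈ Ioo a b,
      ∫⁻ x in Ioo a t, w x = ∫⁻ x in Ioo a b, (Iio t).indicator w x := by
    intro t ht
    rw [lintegral_indicator measurableSet_Iio, Measure.restrict_restrict measurableSet_Iio,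
      Iio_inter_Ioo, min_eq_left ht.2.le]
  have hmeas : Measurable fun p : ℝ × ℝ => w p.1 * (Ioi p.1).indicator F p.2 := by
    simp only [indicator_apply, mem_Ioi]
    exact (hw.comp measurable_fst).mul
      (Measurable.ite (measurableSet_lt measurable_fst measurable_snd)
        (hF.comp measurable_snd) measurable_const)
  calc ∫⁻ x in Ioo a b, w x * ∫⁻ t in Ioo x b, F t
      = ∫⁻ x in Ioo a b, ∫⁻ t in Ioo a b, w x * (Ioi x).indicator F t := by
        refine setLIntegral_congr_fun measurableSet_Ioo fun x hx => ?_
        rw [inner_t x hx, lintegral_const_mul _ (hF.indicator measurableSet_Ioi)]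
    _ = ∫⁻ t in Ioo a b, ∫⁻ x in Ioo a b, w x * (Ioi x).indicator F t :=
        lintegral_lintegral_swap hmeas.aemeasurable
    _ = ∫⁻ t in Ioo a b, F t * ∫⁻ x in Ioo a t, w x := by
        refine setLIntegral_congr_fun measurableSet_Ioo fun t ht => ?_
        have hswap : ∀ x, w x * (Ioi x).indicator F t = (Iio t).indicator w x * F t := by
          intro x
          by_cases hxt : x < t <;> simp [hxt]
        simp_rw [hswap]
        rw [lintegral_mul_const _ (hw.indicator measurableSet_Iio), inner_x t ht, mul_comm]

theorem lintegral_Ioo_sub_rpow {a b c r : ℝ} (hac : a ≤ c) (hcb : c ≤ b)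
    (hr : -1 < r ∨ r ≠ -1 ∧ a < c) :
    ∫⁻ t in Ioo c b, ENNReal.ofReal ((t - a) ^ r) =
      ENNReal.ofReal (((b - a) ^ (r + 1) - (c - a) ^ (r + 1)) / (r + 1)) := by
  have hrpow : -1 < r ∨ r ≠ -1 ∧ (0 : ℝ) ∉ uIcc (c - a) (b - a) :=
    hr.imp_right fun ⟨hr, hac'⟩ =>
      ⟨hr, by rw [uIcc_of_le (by linarith)]; exact fun h => by linarith [h.1]⟩
  have hint : IntervalIntegrable (fun t => (t - a) ^ r) volume c b := by
    have h := (show IntervalIntegrable (fun u : ℝ => u ^ r) volume (c - a) (b - a) by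
      rcases hrpow with hr | ⟨-, h0⟩
      · exact intervalIntegral.intervalIntegrable_rpow' hr
      · exact intervalIntegral.intervalIntegrable_rpow (Or.inr h0)).comp_sub_right a
    simpa only [sub_add_cancel] using h
  rw [← ofReal_integral_eq_lintegral_ofReal (hint.1.mono_set Ioo_subset_Ioc_self),
    ← integral_Ioc_eq_integral_Ioo, ← intervalIntegral.integral_of_le hcb,
    intervalIntegral.integral_comp_sub_right (fun u => u ^ r) a, integral_rpow hrpow]
  filter_upwards [ae_restrict_mem measurableSet_Ioo] with t ht
  exact Real.rpow_nonneg (by linarith [ht.1]) r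

theorem ENNReal.ofReal_rpow_sq {x : ℝ} (hx : 0 ≤ x) (u : ℝ) :
    ENNReal.ofReal (x ^ u) ^ 2 = ENNReal.ofReal (x ^ (2 * u)) := by
  rw [← ENNReal.ofReal_pow (Real.rpow_nonneg hx u), ← Real.rpow_mul_natCast hx, mul_comm]
  norm_num

section Hardy

variable {a σ : ℝ}

theorem sq_lintegral_Ioo_rpow_mul_le {x : ℝ} (hax : a ≤ x) (b : ℝ) {g : ℝ → ENNReal}
    (hg : Measurable g) :
    (∫⁻ t in Ioo x b, ENNReal.ofReal ((t - a) ^ (-σ - 1 / 2)) * g t) ^ 2 ≤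
      (∫⁻ t in Ioo x b, ENNReal.ofReal ((t - a) ^ (-1 - σ))) *
        ∫⁻ t in Ioo x b, ENNReal.ofReal ((t - a) ^ (-σ)) * g t ^ 2 := by
  have hpos : ∀ t ∈ Ioo x b, 0 < t - a := fun t ht => by linarith [ht.1]
  have hsplit : ∫⁻ t in Ioo x b, ENNReal.ofReal ((t - a) ^ (-σ - 1 / 2)) * g t =
      ∫⁻ t in Ioo x b, ENNReal.ofReal ((t - a) ^ ((-1 - σ) / 2)) *
        (ENNReal.ofReal ((t - a) ^ (-σ / 2)) * g t) := by
    refine setLIntegral_congr_fun measurableSet_Ioo fun t ht => ?_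
    rw [← mul_assoc, ← ENNReal.ofReal_mul (Real.rpow_nonneg (hpos t ht).le _),
      ← Real.rpow_add (hpos t ht)]
    ring_nf
  rw [hsplit]
  refine (ENNReal.sq_lintegral_mul_le (by fun_prop) (by fun_prop)).trans_eq ?_
  congr 1 <;> refine setLIntegral_congr_fun measurableSet_Ioo fun t ht => ?_
  · rw [ENNReal.ofReal_rpow_sq (hpos t ht).le]
    ring_nf
  · rw [mul_pow, ENNReal.ofReal_rpow_sq (hpos t ht).le]
    ring_nf

theorem ofReal_rpow_mul_lintegral_Ioo_rpow_le (hσ : 0 < σ) {x b : ℝ} (hax : a < x)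
    (hxb : x ≤ b) :
    ENNReal.ofReal ((x - a) ^ (2 * σ - 1)) *
        ∫⁻ t in Ioo x b, ENNReal.ofReal ((t - a) ^ (-1 - σ)) ≤
      ENNReal.ofReal (1 / σ) * ENNReal.ofReal ((x - a) ^ (σ - 1)) := by
  have hxa : 0 < x - a := by linarith
  rw [lintegral_Ioo_sub_rpow hax.le hxb (Or.inr ⟨by linarith, hax⟩),
    ← ENNReal.ofReal_mul (Real.rpow_nonneg hxa.le _),
    ← ENNReal.ofReal_mul (by positivity), show -1 - σ + 1 = -σ by ring]
  refine ENNReal.ofReal_le_ofReal ?_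
  have hb : 0 ≤ (b - a) ^ (-σ) := Real.rpow_nonneg (by linarith) _
  calc (x - a) ^ (2 * σ - 1) * (((b - a) ^ (-σ) - (x - a) ^ (-σ)) / -σ)
      ≤ (x - a) ^ (2 * σ - 1) * ((x - a) ^ (-σ) / σ) := by
        refine mul_le_mul_of_nonneg_left ?_ (Real.rpow_nonneg hxa.le _)
        rw [div_neg, ← neg_div, neg_sub]
        gcongr
        linarith
    _ = 1 / σ * (x - a) ^ (σ - 1) := by
        rw [mul_div_assoc', ← Real.rpow_add hxa]
        ring_nf

theorem lintegral_Ioo_rpow_sub_one (hσ : 0 < σ) {t : ℝ} (hat : a ≤ t) :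
    ∫⁻ x in Ioo a t, ENNReal.ofReal ((x - a) ^ (σ - 1)) = ENNReal.ofReal ((t - a) ^ σ / σ) := by
  rw [lintegral_Ioo_sub_rpow le_rfl hat (Or.inl (by linarith)), sub_self, sub_add_cancel,
    Real.zero_rpow hσ.ne', sub_zero]

theorem lintegral_Ioo_rpow_mul_sq_lintegral_Ioo_le (hσ : 0 < σ) (b : ℝ) {g : ℝ → ENNReal}
    (hg : Measurable g) :
    ∫⁻ x in Ioo a b, ENNReal.ofReal ((x - a) ^ (2 * σ - 1)) *
        (∫⁻ t in Ioo x b, ENNReal.ofReal ((t - a) ^ (-σ - 1 / 2)) * g t) ^ 2 ≤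
      ENNReal.ofReal (1 / σ ^ 2) * ∫⁻ x in Ioo a b, g x ^ 2 := by
  set w : ℝ → ENNReal := fun x => ENNReal.ofReal ((x - a) ^ (σ - 1))
  set F : ℝ → ENNReal := fun t => ENNReal.ofReal ((t - a) ^ (-σ)) * g t ^ 2
  calc ∫⁻ x in Ioo a b, ENNReal.ofReal ((x - a) ^ (2 * σ - 1)) *
        (∫⁻ t in Ioo x b, ENNReal.ofReal ((t - a) ^ (-σ - 1 / 2)) * g t) ^ 2
      ≤ ∫⁻ x in Ioo a b, ENNReal.ofReal (1 / σ) * (w x * ∫⁻ t in Ioo x b, F t) := by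
        refine setLIntegral_mono' measurableSet_Ioo fun x hx => ?_
        calc ENNReal.ofReal ((x - a) ^ (2 * σ - 1)) *
              (∫⁻ t in Ioo x b, ENNReal.ofReal ((t - a) ^ (-σ - 1 / 2)) * g t) ^ 2
            ≤ ENNReal.ofReal ((x - a) ^ (2 * σ - 1)) *
                ((∫⁻ t in Ioo x b, ENNReal.ofReal ((t - a) ^ (-1 - σ))) *
                  ∫⁻ t in Ioo x b, F t) :=
              mul_le_mul_right (sq_lintegral_Ioo_rpow_mul_le hx.1.le b hg) _
          _ ≤ ENNReal.ofReal (1 / σ) * w x * ∫⁻ t in Ioo x b, F t := by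
              rw [← mul_assoc]
              exact mul_le_mul_left (ofReal_rpow_mul_lintegral_Ioo_rpow_le hσ hx.1 hx.2.le) _
          _ = ENNReal.ofReal (1 / σ) * (w x * ∫⁻ t in Ioo x b, F t) := mul_assoc _ _ _
    _ = ENNReal.ofReal (1 / σ) * ∫⁻ t in Ioo a b, F t * ∫⁻ x in Ioo a t, w x := by
        rw [lintegral_const_mul' _ _ ENNReal.ofReal_ne_top,
          lintegral_Ioo_mul_lintegral_Ioo_comm (by fun_prop) (by fun_prop)]
    _ = ENNReal.ofReal (1 / σ) * ∫⁻ t in Ioo a b, ENNReal.ofReal (1 / σ) * g t ^ 2 := by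
        congr 1
        refine setLIntegral_congr_fun measurableSet_Ioo fun t ht => ?_
        have hta : 0 < t - a := by linarith [ht.1]
        dsimp only [F, w]
        rw [lintegral_Ioo_rpow_sub_one hσ ht.1.le, mul_right_comm,
          ← ENNReal.ofReal_mul (Real.rpow_nonneg hta.le _), mul_div_assoc',
          ← Real.rpow_add hta, neg_add_cancel, Real.rpow_zero]
    _ = ENNReal.ofReal (1 / σ ^ 2) * ∫⁻ x in Ioo a b, g x ^ 2 := by
        rw [lintegral_const_mul' _ _ ENNReal.ofReal_ne_top, ← mul_assoc,
          ← ENNReal.ofReal_mul (by positivity)]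
        ring_nf

end Hardy

/-- Two-weight Hardy inequality instance: for `Re(s) > 0` there is `d ∈ (0,∞)`
such that for all nonnegative measurable `h`,
`∫_a^{a+1} (x-a)^{2Re(s)-1} (∫_x^{a+1} (t-a)^{-Re(s)-1/2} h(t) dt)² dx
  ≤ d ∫_a^{a+1} h(x)² dx`. -/
theorem stmt13 (a : ℝ) (s : ℂ) (hs : 0 < s.re) :
    ∃ d : ℝ, 0 < d ∧
      ∀ h : ℝ → ℝ, Measurable h → (∀ x, 0 ≤ h x) →
        ∫⁻ x in Ioo a (a + 1),
          ENNReal.ofReal ((x - a) ^ (2 * s.re - 1 : ℝ)) *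
            (∫⁻ t in Ioo x (a + 1),
              ENNReal.ofReal ((t - a) ^ (-s.re - 1/2 : ℝ) * h t)) ^ 2 ≤
        ENNReal.ofReal d * ∫⁻ x in Ioo a (a + 1), ENNReal.ofReal (h x ^ 2) := by
  refine ⟨1 / s.re ^ 2, by positivity, fun h hm hpos => ?_⟩
  have hsplit : ∀ x ∈ Ioo a (a + 1),
      ∫⁻ t in Ioo x (a + 1), ENNReal.ofReal ((t - a) ^ (-s.re - 1/2 : ℝ) * h t) =
        ∫⁻ t in Ioo x (a + 1), ENNReal.ofReal ((t - a) ^ (-s.re - 1/2 : ℝ)) *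
          ENNReal.ofReal (h t) := fun x hx =>
    setLIntegral_congr_fun measurableSet_Ioo fun t ht =>
      ENNReal.ofReal_mul (Real.rpow_nonneg (by linarith [hx.1, ht.1]) _)
  rw [setLIntegral_congr_fun measurableSet_Ioo fun x hx => by rw [hsplit x hx]]
  simp_rw [ENNReal.ofReal_pow (hpos _)]
  exact lintegral_Ioo_rpow_mul_sq_lintegral_Ioo_le hs (a + 1) hm.ennreal_ofReal
end

section
/- For any f ∈ H¹₀((a,b)) (f absolutely continuous on [a,b], f(a)=f(b)=0, f' ∈ L²), the one-dimensional Hardy inequality with distance to the boundary holds: ∫_a^b |f'(x)|² dx ≥ (1/4) ∫_a^b |f(x)|²/d(x)² dx, where d(x) = min(x-a, b-x). -/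
open MeasureTheory Set Filter

open scoped ENNReal


set_option maxHeartbeats 1000000 in
lemma hardy_half (a c : ℝ) (hac : a < c) (g g' : ℝ → ℂ)
    (hmeas : Measurable g')
    (hderiv : ∀ x ∈ Ioo a c, HasDerivAt g (g' x) x)
    (hg' : IntegrableOn g' (Ioo a c))
    (hga : Tendsto g (nhdsWithin a (Ioi a)) (nhds 0)) :
    ∫⁻ x in Ioo a c, ENNReal.ofReal (‖g x‖ ^ 2 / (x - a) ^ 2) ≤
      4 * ∫⁻ x in Ioo a c, ENNReal.ofReal (‖g' x‖ ^ 2) := by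
  -- Step 1: pointwise bound via FTC
  have key1 : ∀ x ∈ Ioo a c, ‖g x‖ ≤ ∫ t in Ioo a x, ‖g' t‖ := by
    intro x hx
    set C := ∫ t in Ioo a x, ‖g' t‖ with hC
    have hbound : ∀ y ∈ Ioo a x, ‖g y‖ + C ≥ ‖g x‖ := by
      intro y hy
      have hyc : y ∈ Ioo a c := ⟨hy.1, lt_trans hy.2 hx.2⟩
      have hsub : Set.uIcc y x ⊆ Ioo a c := by
        rw [Set.uIcc_of_le hy.2.le]
        exact fun t ht => ⟨lt_of_lt_of_le hy.1 ht.1, lt_of_le_of_lt ht.2 hx.2⟩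
      have hii : IntervalIntegrable g' MeasureTheory.volume y x := by
        rw [intervalIntegrable_iff_integrableOn_Ioc_of_le hy.2.le]
        exact hg'.mono_set (fun t ht => ⟨lt_trans hy.1 ht.1, lt_of_le_of_lt ht.2 hx.2⟩)
      have hftc : ∫ t in y..x, g' t = g x - g y :=
        intervalIntegral.integral_eq_sub_of_hasDerivAt
          (fun t ht => hderiv t (hsub ht)) hii
      have h1 : ‖g x - g y‖ ≤ ∫ t in Ioo y x, ‖g' t‖ := by
        rw [← hftc]
        calc ‖∫ t in y..x, g' t‖ ≤ ∫ t in Set.uIoc y x, ‖g' t‖ :=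
              intervalIntegral.norm_integral_le_integral_norm_uIoc
          _ = ∫ t in y..x, ‖g' t‖ := by
              rw [intervalIntegral.integral_of_le hy.2.le, Set.uIoc_of_le hy.2.le]
          _ = ∫ t in Ioc y x, ‖g' t‖ := intervalIntegral.integral_of_le hy.2.le
          _ = ∫ t in Ioo y x, ‖g' t‖ := integral_Ioc_eq_integral_Ioo
      have h2 : ∫ t in Ioo y x, ‖g' t‖ ≤ C := by
        apply setIntegral_mono_set
        · exact (hg'.mono_set (fun t ht => ⟨ht.1, lt_trans ht.2 hx.2⟩)).norm
        · filter_upwards with t using norm_nonneg _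
        · exact HasSubset.Subset.eventuallyLE (fun t ht => ⟨lt_trans hy.1 ht.1, ht.2⟩)
      calc ‖g x‖ ≤ ‖g y‖ + ‖g x - g y‖ := by
            have := norm_sub_norm_le (g x) (g y); linarith [norm_sub_rev (g x) (g y) ▸ this]
        _ ≤ ‖g y‖ + C := by linarith
    have htend : Tendsto (fun y => ‖g y‖ + C) (nhdsWithin a (Ioi a)) (nhds C) := by
      simpa using (hga.norm).add (tendsto_const_nhds (x := C))
    have hev : ∀ᶠ y in nhdsWithin a (Ioi a), ‖g x‖ ≤ ‖g y‖ + C := by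
      filter_upwards [Ioo_mem_nhdsGT_of_mem (left_mem_Ico.mpr hx.1)] with y hy
      exact hbound y hy
    exact ge_of_tendsto htend hev
  have hg'n : IntegrableOn (fun t => ‖g' t‖) (Ioo a c) := hg'.norm
  set F : ℝ → ℝ≥0∞ := fun t => ENNReal.ofReal (‖g' t‖ ^ 2) with hF
  set B : ℝ → ℝ≥0∞ := fun x => ∫⁻ t in Ioo a x,
      ENNReal.ofReal ((t - a) ^ ((1:ℝ)/2)) * F t with hB
  have key2 : ∀ x ∈ Ioo a c, ENNReal.ofReal (‖g x‖ ^ 2) ≤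
      ENNReal.ofReal (2 * (x - a) ^ ((1:ℝ)/2)) * B x := by
    intro x hx
    have hax : a < x := hx.1
    have hInt : IntegrableOn (fun t => ‖g' t‖) (Ioo a x) :=
      hg'n.mono_set (fun t ht => ⟨ht.1, ht.2.trans hx.2⟩)
    have hA : ENNReal.ofReal ‖g x‖ ≤ ∫⁻ t in Ioo a x, ENNReal.ofReal ‖g' t‖ := by
      calc ENNReal.ofReal ‖g x‖ ≤ ENNReal.ofReal (∫ t in Ioo a x, ‖g' t‖) :=
            ENNReal.ofReal_le_ofReal (key1 x hx)
        _ = ∫⁻ t in Ioo a x, ENNReal.ofReal ‖g' t‖ :=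
            ofReal_integral_eq_lintegral_ofReal hInt
              (Filter.Eventually.of_forall fun t => norm_nonneg _)
    set u : ℝ → ℝ≥0∞ := fun t => ENNReal.ofReal ((t - a) ^ (-(1/4) : ℝ)) with hu
    set v : ℝ → ℝ≥0∞ := fun t => ENNReal.ofReal ((t - a) ^ ((1/4) : ℝ) * ‖g' t‖) with hv
    have humeas : Measurable u := by measurability
    have hvmeas : Measurable v := by
      have h1 : Measurable fun t : ℝ => (t - a) ^ ((1/4) : ℝ) := by measurability
      exact (h1.mul hmeas.norm).ennreal_ofReal
    have hsplit : ∫⁻ t in Ioo a x, ENNReal.ofReal ‖g' t‖ = ∫⁻ t in Ioo a x, (u t) * (v t) := by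
      apply setLIntegral_congr_fun measurableSet_Ioo
      intro t ht
      beta_reduce
      have h0 : (0:ℝ) < t - a := sub_pos.mpr ht.1
      rw [hu, hv]
      rw [← ENNReal.ofReal_mul (Real.rpow_nonneg h0.le _), ← mul_assoc,
        ← Real.rpow_add h0]
      norm_num
    have hholder := ENNReal.lintegral_mul_le_Lp_mul_Lq (volume.restrict (Ioo a x))
      Real.HolderConjugate.two_two
      humeas.aemeasurable hvmeas.aemeasurable
    have hU : ∫⁻ t in Ioo a x, u t ^ (2:ℝ) = ENNReal.ofReal (2 * (x - a) ^ ((1:ℝ)/2)) := by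
      have h1 : ∫⁻ t in Ioo a x, u t ^ (2:ℝ)
          = ∫⁻ t in Ioo a x, ENNReal.ofReal ((t - a) ^ (-(1/2) : ℝ)) := by
        apply setLIntegral_congr_fun measurableSet_Ioo
        intro t ht
        beta_reduce
        have h0 : (0:ℝ) < t - a := sub_pos.mpr ht.1
        rw [hu, ENNReal.ofReal_rpow_of_nonneg (Real.rpow_nonneg h0.le _) (by norm_num : (0:ℝ) ≤ 2),
          ← Real.rpow_mul h0.le]
        norm_num
      have hii : IntervalIntegrable (fun t : ℝ => (t - a) ^ (-(1/2) : ℝ)) volume a x := by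
        have h := (intervalIntegral.intervalIntegrable_rpow' (a := 0) (b := x - a) (r := -(1/2)) (by norm_num)).comp_sub_right a
        simpa using h
      have hint : IntegrableOn (fun t : ℝ => (t - a) ^ (-(1/2) : ℝ)) (Ioo a x) := by
        have := (intervalIntegrable_iff_integrableOn_Ioc_of_le hax.le).mp hii
        exact this.mono_set Ioo_subset_Ioc_self
      have hval : ∫ t in Ioo a x, (t - a) ^ (-(1/2) : ℝ) = 2 * (x - a) ^ ((1:ℝ)/2) := by
        rw [← integral_Ioc_eq_integral_Ioo, ← intervalIntegral.integral_of_le hax.le]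
        have hcomp : ∫ t in a..x, (t - a) ^ (-(1/2) : ℝ)
            = ∫ s in (a - a)..(x - a), s ^ (-(1/2) : ℝ) :=
          intervalIntegral.integral_comp_sub_right (fun s => s ^ (-(1/2) : ℝ)) a
        rw [hcomp, sub_self, integral_rpow (Or.inl (by norm_num))]
        rw [Real.zero_rpow (by norm_num)]
        norm_num
        ring
      rw [h1, ← ofReal_integral_eq_lintegral_ofReal hint ?hnn, hval]
      case hnn =>
        filter_upwards [self_mem_ae_restrict (measurableSet_Ioo (a := a) (b := x))] with t ht
        exact Real.rpow_nonneg (by linarith [ht.1] : (0:ℝ) ≤ t - a) _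
    have hV : ∫⁻ t in Ioo a x, v t ^ (2:ℝ) = B x := by
      rw [hB]
      apply setLIntegral_congr_fun measurableSet_Ioo
      intro t ht
      beta_reduce
      have h0 : (0:ℝ) < t - a := sub_pos.mpr ht.1
      rw [hv, ENNReal.ofReal_rpow_of_nonneg
          (mul_nonneg (Real.rpow_nonneg h0.le _) (norm_nonneg _)) (by norm_num : (0:ℝ) ≤ 2),
        Real.mul_rpow (Real.rpow_nonneg h0.le _) (norm_nonneg _),
        ← Real.rpow_mul h0.le, ENNReal.ofReal_mul (Real.rpow_nonneg h0.le _),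
        Real.rpow_two]
      norm_num
      simp [hF]
    have hAB : ENNReal.ofReal ‖g x‖ ≤
        (ENNReal.ofReal (2 * (x - a) ^ ((1:ℝ)/2))) ^ ((1:ℝ)/2) * (B x) ^ ((1:ℝ)/2) := by
      calc ENNReal.ofReal ‖g x‖ ≤ ∫⁻ t in Ioo a x, ENNReal.ofReal ‖g' t‖ := hA
        _ = ∫⁻ t in Ioo a x, (u t) * (v t) := hsplit
        _ ≤ (∫⁻ t in Ioo a x, u t ^ (2:ℝ)) ^ ((1:ℝ)/2)
            * (∫⁻ t in Ioo a x, v t ^ (2:ℝ)) ^ ((1:ℝ)/2) := hholder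
        _ = _ := by rw [hU, hV]
    calc ENNReal.ofReal (‖g x‖ ^ 2) = (ENNReal.ofReal ‖g x‖) ^ 2 :=
          (ENNReal.ofReal_pow (norm_nonneg _) 2)
      _ ≤ ((ENNReal.ofReal (2 * (x - a) ^ ((1:ℝ)/2))) ^ ((1:ℝ)/2) * (B x) ^ ((1:ℝ)/2)) ^ 2 :=
          pow_le_pow_left' hAB 2
      _ = ENNReal.ofReal (2 * (x - a) ^ ((1:ℝ)/2)) * B x := by
          rw [mul_pow, ← ENNReal.rpow_natCast (_ ^ ((1:ℝ)/2)) 2,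
            ← ENNReal.rpow_natCast ((B x) ^ ((1:ℝ)/2)) 2,
            ← ENNReal.rpow_mul, ← ENNReal.rpow_mul]
          norm_num
  -- the weight kernel
  set w : ℝ → ℝ → ℝ≥0∞ := fun x t =>
    ENNReal.ofReal (2 * (x - a) ^ (-(3/2) : ℝ) * (t - a) ^ ((1:ℝ)/2)) with hw
  set K : ℝ → ℝ → ℝ≥0∞ := fun x t => if t < x then w x t * F t else 0 with hK
  have hFmeas : Measurable F := by
    exact ((hmeas.norm).pow measurable_const).ennreal_ofReal
  have key3 : ∀ x ∈ Ioo a c, ENNReal.ofReal (‖g x‖ ^ 2 / (x - a) ^ 2)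
      ≤ ∫⁻ t in Ioo a c, K x t := by
    intro x hx
    have hax : a < x := hx.1
    have h0 : (0:ℝ) < x - a := sub_pos.mpr hax
    have e1 : ∫⁻ t in Ioo a c, K x t = ∫⁻ t in Ioo a x, w x t * F t := by
      have hpt : ∀ t, K x t = (Iio x).indicator (fun t => w x t * F t) t := fun t => by
        by_cases h : t < x <;> simp [hK, Set.indicator, Set.mem_Iio, h]
      simp_rw [hpt]
      rw [lintegral_indicator measurableSet_Iio, Measure.restrict_restrict measurableSet_Iio]
      congr 1
      rw [show Iio x ∩ Ioo a c = Ioo a x by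
        ext t
        simp only [mem_inter_iff, mem_Iio, mem_Ioo]
        constructor
        · rintro ⟨h1, h2, h3⟩; exact ⟨h2, h1⟩
        · rintro ⟨h1, h2⟩; exact ⟨h2, h1, h2.trans hx.2⟩]
    have e2 : ∫⁻ t in Ioo a x, w x t * F t
        = ENNReal.ofReal (2 * (x - a) ^ (-(3/2) : ℝ)) * B x := by
      rw [hB, ← lintegral_const_mul' _ _ ENNReal.ofReal_ne_top]
      apply setLIntegral_congr_fun measurableSet_Ioo
      intro t ht
      have ht0 : (0:ℝ) < t - a := sub_pos.mpr ht.1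
      simp only [hw]
      rw [ENNReal.ofReal_mul (by positivity), ENNReal.ofReal_mul (by norm_num : (0:ℝ) ≤ 2)]
      ring
    have e2' : ENNReal.ofReal (2 * (x - a) ^ (-(3/2) : ℝ)) * B x
        = ENNReal.ofReal 2 * (ENNReal.ofReal ((x - a) ^ (-(3/2) : ℝ)) * B x) := by
      rw [ENNReal.ofReal_mul (by norm_num : (0:ℝ) ≤ 2), mul_assoc]
    calc ENNReal.ofReal (‖g x‖ ^ 2 / (x - a) ^ 2)
        = ENNReal.ofReal (‖g x‖ ^ 2) / ENNReal.ofReal ((x - a) ^ 2) :=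
          ENNReal.ofReal_div_of_pos (by positivity)
      _ ≤ (ENNReal.ofReal (2 * (x - a) ^ ((1:ℝ)/2)) * B x) / ENNReal.ofReal ((x - a) ^ 2) :=
          ENNReal.div_le_div_right (key2 x hx) _
      _ = ENNReal.ofReal (2 * (x - a) ^ (-(3/2) : ℝ)) * B x := by
          rw [mul_comm (ENNReal.ofReal _) (B x), mul_div_assoc,
            ← ENNReal.ofReal_div_of_pos (by positivity), mul_comm]
          congr 2
          rw [show ((x - a)^2 : ℝ) = (x - a) ^ (2:ℝ) by rw [Real.rpow_two],
            mul_div_assoc, ← Real.rpow_sub h0]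
          norm_num
      _ = ∫⁻ t in Ioo a x, w x t * F t := e2.symm
      _ = ∫⁻ t in Ioo a c, K x t := e1.symm
  have hKmeas : Measurable (fun p : ℝ × ℝ => K p.1 p.2) := by
    apply Measurable.ite (measurableSet_lt measurable_snd measurable_fst)
    · refine Measurable.mul (f := fun p : ℝ × ℝ => w p.1 p.2) (g := fun p : ℝ × ℝ => F p.2) ?_ ?_
      · apply Measurable.ennreal_ofReal
        have hb1 : Measurable fun y : ℝ => 2 * (y - a) ^ (-(3/2) : ℝ) := by measurability
        have hb2 : Measurable fun y : ℝ => (y - a) ^ ((1:ℝ)/2) := by measurability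
        exact (hb1.comp measurable_fst).mul (hb2.comp measurable_snd)
      · exact hFmeas.comp measurable_snd
    · exact measurable_const
  have swap : ∫⁻ x in Ioo a c, ∫⁻ t in Ioo a c, K x t
      = ∫⁻ t in Ioo a c, ∫⁻ x in Ioo a c, K x t :=
    lintegral_lintegral_swap hKmeas.aemeasurable
  have key4 : ∀ t ∈ Ioo a c, ∫⁻ x in Ioo a c, K x t ≤ 4 * F t := by
    intro t ht
    have h0 : (0:ℝ) < t - a := sub_pos.mpr ht.1
    have e1 : ∫⁻ x in Ioo a c, K x t = ∫⁻ x in Ioo t c, w x t * F t := by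
      have hpt : ∀ x, K x t = (Ioi t).indicator (fun x => w x t * F t) x := fun x => by
        by_cases h : t < x <;> simp [hK, Set.indicator, Set.mem_Ioi, h]
      simp_rw [hpt]
      rw [lintegral_indicator measurableSet_Ioi, Measure.restrict_restrict measurableSet_Ioi]
      congr 1
      rw [show Ioi t ∩ Ioo a c = Ioo t c by
        ext y
        simp only [mem_inter_iff, mem_Ioi, mem_Ioo]
        constructor
        · rintro ⟨h1, h2, h3⟩; exact ⟨h1, h3⟩
        · rintro ⟨h1, h2⟩; exact ⟨h1, ht.1.trans h1, h2⟩]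
    have e2 : ∫⁻ x in Ioo t c, w x t * F t
        = (∫⁻ x in Ioo t c, ENNReal.ofReal (2 * (x - a) ^ (-(3/2) : ℝ)))
          * (ENNReal.ofReal ((t - a) ^ ((1:ℝ)/2)) * F t) := by
      rw [← lintegral_mul_const' _ _
        (ENNReal.mul_ne_top ENNReal.ofReal_ne_top ENNReal.ofReal_ne_top)]
      apply setLIntegral_congr_fun measurableSet_Ioo
      intro x hxm
      have hx0 : (0:ℝ) < x - a := by have := ht.1.trans hxm.1; linarith [hxm.1]
      simp only [hw]
      rw [ENNReal.ofReal_mul (by positivity), ENNReal.ofReal_mul (by norm_num : (0:ℝ) ≤ 2)]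
      ring
    have e3 : ∫⁻ x in Ioo t c, ENNReal.ofReal (2 * (x - a) ^ (-(3/2) : ℝ))
        ≤ ENNReal.ofReal (4 * (t - a) ^ (-(1/2) : ℝ)) := by
      have hcont : ContinuousOn (fun x : ℝ => 2 * (x - a) ^ (-(3/2) : ℝ)) (Icc t c) := by
        intro x hxm
        have hx0 : x - a ≠ 0 := ne_of_gt (by linarith [hxm.1, h0])
        have hca : ContinuousAt (fun y : ℝ => (y - a) ^ (-(3/2) : ℝ)) x :=
          ContinuousAt.rpow_const (by fun_prop) (Or.inl hx0)
        exact (continuousAt_const.mul hca).continuousWithinAt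
      have hint : IntegrableOn (fun x : ℝ => 2 * (x - a) ^ (-(3/2) : ℝ)) (Ioo t c) :=
        (hcont.integrableOn_Icc).mono_set Ioo_subset_Icc_self
      rw [← ofReal_integral_eq_lintegral_ofReal hint ?hnn]
      case hnn =>
        filter_upwards [self_mem_ae_restrict (measurableSet_Ioo (a := t) (b := c))] with x hxm
        have hx0 : (0:ℝ) < x - a := by linarith [hxm.1]
        positivity
      apply ENNReal.ofReal_le_ofReal
      have hval : ∫ x in Ioo t c, 2 * (x - a) ^ (-(3/2) : ℝ)
          = 4 * ((t - a) ^ (-(1/2) : ℝ) - (c - a) ^ (-(1/2) : ℝ)) := by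
        rw [← integral_Ioc_eq_integral_Ioo, ← intervalIntegral.integral_of_le ht.2.le,
          intervalIntegral.integral_const_mul]
        have hcomp : ∫ x in t..c, (x - a) ^ (-(3/2) : ℝ)
            = ∫ s in (t - a)..(c - a), s ^ (-(3/2) : ℝ) :=
          intervalIntegral.integral_comp_sub_right (fun s => s ^ (-(3/2) : ℝ)) a
        have hnot : (0:ℝ) ∉ Set.uIcc (t - a) (c - a) := by
          rw [Set.uIcc_of_le (by linarith [ht.2] : t - a ≤ c - a)]
          intro hmem
          exact absurd hmem.1 (by linarith)
        rw [hcomp, integral_rpow (Or.inr ⟨by norm_num, hnot⟩)]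
        have hca : (0:ℝ) < c - a := by linarith [ht.2]
        rw [show (-(3/2) : ℝ) + 1 = -(1/2) by norm_num]
        field_simp
        ring
      rw [hval]
      have hca0 : (0:ℝ) ≤ (c - a) ^ (-(1/2) : ℝ) :=
        Real.rpow_nonneg (by linarith [ht.2]) _
      linarith
    calc ∫⁻ x in Ioo a c, K x t = ∫⁻ x in Ioo t c, w x t * F t := e1
      _ = (∫⁻ x in Ioo t c, ENNReal.ofReal (2 * (x - a) ^ (-(3/2) : ℝ)))
          * (ENNReal.ofReal ((t - a) ^ ((1:ℝ)/2)) * F t) := e2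
      _ ≤ ENNReal.ofReal (4 * (t - a) ^ (-(1/2) : ℝ))
          * (ENNReal.ofReal ((t - a) ^ ((1:ℝ)/2)) * F t) := by
          exact mul_le_mul_left e3 _
      _ = 4 * F t := by
          rw [← mul_assoc, ← ENNReal.ofReal_mul (by positivity), mul_assoc,
            ← Real.rpow_add h0]
          norm_num
  calc ∫⁻ x in Ioo a c, ENNReal.ofReal (‖g x‖ ^ 2 / (x - a) ^ 2)
      ≤ ∫⁻ x in Ioo a c, ∫⁻ t in Ioo a c, K x t := setLIntegral_mono' measurableSet_Ioo key3
    _ = ∫⁻ t in Ioo a c, ∫⁻ x in Ioo a c, K x t := swap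
    _ ≤ ∫⁻ t in Ioo a c, 4 * F t := setLIntegral_mono' measurableSet_Ioo key4
    _ = 4 * ∫⁻ t in Ioo a c, F t := lintegral_const_mul' 4 F (by norm_num)
    _ = 4 * ∫⁻ x in Ioo a c, ENNReal.ofReal (‖g' x‖ ^ 2) := rfl

set_option maxHeartbeats 1000000 in
/-- Hardy's inequality with distance to the boundary: for `f ∈ H¹₀((a,b))`,
`∫_a^b |f'|² ≥ (1/4) ∫_a^b |f|²/d(x)²` with `d(x) = min(x-a, b-x)`. -/
theorem stmt19 (a b : ℝ) (hab : a < b) (f f' : ℝ → ℂ)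
    (hderiv : ∀ x ∈ Ioo a b, HasDerivAt f (f' x) x)
    (hf : IntegrableOn (fun x => ‖f x‖ ^ 2) (Ioo a b))
    (hf' : IntegrableOn (fun x => ‖f' x‖ ^ 2) (Ioo a b))
    (hfa : Tendsto f (nhdsWithin a (Ioi a)) (nhds 0))
    (hfb : Tendsto f (nhdsWithin b (Iio b)) (nhds 0)) :
    ∫⁻ x in Ioo a b, ENNReal.ofReal (‖f x‖ ^ 2 / min (x - a) (b - x) ^ 2) ≤
      4 * ∫⁻ x in Ioo a b, ENNReal.ofReal (‖f' x‖ ^ 2) := by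
  set c : ℝ := (a + b) / 2 with hc
  have hac : a < c := by rw [hc]; linarith
  have hcb : c < b := by rw [hc]; linarith
  set D : ℝ → ℂ := fun t => deriv f t with hD
  have hDmeas : Measurable D := measurable_deriv f
  have hDeq : ∀ x ∈ Ioo a b, D x = f' x := fun x hx => (hderiv x hx).deriv
  have hderivD : ∀ x ∈ Ioo a b, HasDerivAt f (D x) x := fun x hx => by
    rw [hDeq x hx]; exact hderiv x hx
  have hDint : IntegrableOn D (Ioo a b) := by
    have h1 : IntegrableOn (fun x => 1 + ‖f' x‖ ^ 2) (Ioo a b) := by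
      apply Integrable.add _ hf'
      exact integrableOn_const measure_Ioo_lt_top.ne
    apply Integrable.mono' h1 hDmeas.aestronglyMeasurable
    filter_upwards [self_mem_ae_restrict (measurableSet_Ioo (a := a) (b := b))] with x hx
    rw [hDeq x hx]
    nlinarith [norm_nonneg (f' x), sq_nonneg (‖f' x‖ - 1)]
  have hRHSD : ∫⁻ x in Ioo a b, ENNReal.ofReal (‖f' x‖ ^ 2)
      = ∫⁻ x in Ioo a b, ENNReal.ofReal (‖D x‖ ^ 2) :=
    setLIntegral_congr_fun measurableSet_Ioo
      (fun x hx => by rw [hDeq x hx])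
  -- left half
  have hL := hardy_half a c hac f D hDmeas
    (fun x hx => hderivD x ⟨hx.1, hx.2.trans hcb⟩)
    (hDint.mono_set (Ioo_subset_Ioo_right hcb.le)) hfa
  -- right half via reflection
  set s : ℝ := a + b with hs
  set g : ℝ → ℂ := fun u => f (s - u) with hg
  set G : ℝ → ℂ := fun u => -D (s - u) with hG
  have e : MeasurePreserving (fun u : ℝ => s - u) volume volume :=
    Measure.measurePreserving_sub_left volume s
  have emb : MeasurableEmbedding (fun u : ℝ => s - u) :=
    (MeasurableEquiv.subLeft s).measurableEmbedding
  have himg : (fun u : ℝ => s - u) '' Ioo a c = Ioo c b := by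
    rw [Set.image_const_sub_Ioo]
    congr 1 <;> (simp only [hc, hs]; ring)
  have hGmeas : Measurable G :=
    (hDmeas.comp (measurable_const.sub measurable_id)).neg
  have hGderiv : ∀ u ∈ Ioo a c, HasDerivAt g (G u) u := by
    intro u hu
    have hmem : s - u ∈ Ioo a b := by
      constructor
      · rw [hs]; linarith [hu.2, hcb]
      · rw [hs]; linarith [hu.1]
    have h2 : HasDerivAt (fun u : ℝ => f (s - u)) (-D (s - u)) u :=
      HasDerivAt.comp_const_sub s u (hderivD _ hmem)
    exact h2
  have hGint : IntegrableOn G (Ioo a c) := by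
    refine ⟨hGmeas.aestronglyMeasurable, ?_⟩
    have htrans := e.setLIntegral_comp_emb emb (fun x => (‖D x‖₊ : ℝ≥0∞)) (Ioo a c)
    rw [himg] at htrans
    have hfin := (hDint.mono_set (Ioo_subset_Ioo_left hac.le)).2
    rw [HasFiniteIntegral] at hfin ⊢
    calc ∫⁻ u in Ioo a c, (‖G u‖₊ : ℝ≥0∞)
        = ∫⁻ u in Ioo a c, (‖D (s - u)‖₊ : ℝ≥0∞) := by
          apply setLIntegral_congr_fun measurableSet_Ioo
          exact fun u hu => by rw [hG]; simp
      _ = ∫⁻ x in Ioo c b, (‖D x‖₊ : ℝ≥0∞) := htrans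
      _ < ⊤ := hfin
  have hga : Tendsto g (nhdsWithin a (Ioi a)) (nhds 0) := by
    apply hfb.comp
    apply tendsto_nhdsWithin_of_tendsto_nhds_of_eventually_within
    · have h1 : Tendsto (fun u : ℝ => s - u) (nhds a) (nhds (s - a)) :=
        (continuous_const.sub continuous_id).tendsto a
      have h2 : s - a = b := by rw [hs]; ring
      rw [h2] at h1
      exact h1.mono_left nhdsWithin_le_nhds
    · filter_upwards [self_mem_nhdsWithin] with u hu
      have : a < u := hu
      rw [mem_Iio, hs]; linarith
  have hR := hardy_half a c hac g G hGmeas hGderiv hGint hga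
  -- transfer the right-half inequality
  have hTL : ∫⁻ u in Ioo a c, ENNReal.ofReal (‖g u‖ ^ 2 / (u - a) ^ 2)
      = ∫⁻ x in Ioo c b, ENNReal.ofReal (‖f x‖ ^ 2 / (b - x) ^ 2) := by
    have htrans := e.setLIntegral_comp_emb emb
      (fun x => ENNReal.ofReal (‖f x‖ ^ 2 / (b - x) ^ 2)) (Ioo a c)
    rw [himg] at htrans
    rw [← htrans]
    apply setLIntegral_congr_fun measurableSet_Ioo
    intro u hu
    rw [hg]
    congr 2
    rw [hs]; ring
  have hTR : ∫⁻ u in Ioo a c, ENNReal.ofReal (‖G u‖ ^ 2)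
      = ∫⁻ x in Ioo c b, ENNReal.ofReal (‖D x‖ ^ 2) := by
    have htrans := e.setLIntegral_comp_emb emb
      (fun x => ENNReal.ofReal (‖D x‖ ^ 2)) (Ioo a c)
    rw [himg] at htrans
    rw [← htrans]
    apply setLIntegral_congr_fun measurableSet_Ioo
    exact fun u hu => by rw [hG]; simp
  rw [hTL, hTR] at hR
  -- split the integrals at the midpoint
  have hdisj : Disjoint (Ioo a c) (Ico c b) :=
    Disjoint.mono Ioo_subset_Iio_self Ico_subset_Ici_self (Iio_disjoint_Ici le_rfl)
  have hsplit : ∀ φ : ℝ → ℝ≥0∞, ∫⁻ x in Ioo a b, φ x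
      = (∫⁻ x in Ioo a c, φ x) + ∫⁻ x in Ioo c b, φ x := by
    intro φ
    rw [← Ioo_union_Ico_eq_Ioo hac hcb.le, lintegral_union measurableSet_Ico hdisj]
    congr 1
    exact (setLIntegral_congr Ioo_ae_eq_Ico).symm
  rw [hsplit, hRHSD, hsplit]
  have hmin1 : ∫⁻ x in Ioo a c, ENNReal.ofReal (‖f x‖ ^ 2 / min (x - a) (b - x) ^ 2)
      = ∫⁻ x in Ioo a c, ENNReal.ofReal (‖f x‖ ^ 2 / (x - a) ^ 2) := by
    apply setLIntegral_congr_fun measurableSet_Ioo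
    intro x hx
    beta_reduce
    rw [min_eq_left (by rw [hc, hs] at hx; linarith [hx.2])]
  have hmin2 : ∫⁻ x in Ioo c b, ENNReal.ofReal (‖f x‖ ^ 2 / min (x - a) (b - x) ^ 2)
      = ∫⁻ x in Ioo c b, ENNReal.ofReal (‖f x‖ ^ 2 / (b - x) ^ 2) := by
    apply setLIntegral_congr_fun measurableSet_Ioo
    intro x hx
    beta_reduce
    rw [min_eq_right (by rw [hc, hs] at hx; linarith [hx.1])]
  rw [hmin1, hmin2, mul_add]
  exact add_le_add hL hR
end
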